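/- arXiv:0709.0598 — 5 statements merged into one kernel-verified Lean document; each statement's English description precedes it below -/
import Mathlib

section
/- For every integer l ≥ 2 and real γ with 0 < γ < 2 and γ ≠ 1, the quadruple integral ρ_γ(l) = ∫_l^{l+1} ∫_{u-1}^{u} ∫_0^{1} ∫_{x-1}^{x} (v−y)^{−2−γ} dy dx dv du equals (|l−2|^{2−γ} − 4|l−1|^{2−γ} + 6 l^{2−γ} − 4(l+1)^{2−γ} + (l+2)^{2−γ}) / ((γ−2)(γ−1)γ(γ+1)). -/
open MeasureTheory intervalIntegral

private lemma notmem {a b : ℝ} (ha : 0 < a) (hb : 0 < b) : (0:ℝ) ∉ Set.uIcc a b :=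
  Set.notMem_uIcc_of_lt ha hb

private lemma rint_add (r a b c : ℝ)
    (h : -1 < r ∨ r ≠ -1 ∧ (0:ℝ) ∉ Set.uIcc (a + c) (b + c)) :
    (∫ x in a..b, (x + c) ^ r) = ((b + c) ^ (r + 1) - (a + c) ^ (r + 1)) / (r + 1) :=
  (intervalIntegral.integral_comp_add_right (fun t : ℝ => t ^ r) c).trans (integral_rpow h)

private lemma rint_sub (r a b c : ℝ)
    (h : -1 < r ∨ r ≠ -1 ∧ (0:ℝ) ∉ Set.uIcc (a - c) (b - c)) :
    (∫ x in a..b, (x - c) ^ r) = ((b - c) ^ (r + 1) - (a - c) ^ (r + 1)) / (r + 1) :=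
  (intervalIntegral.integral_comp_sub_right (fun t : ℝ => t ^ r) c).trans (integral_rpow h)

private lemma rintI_add (r a b c : ℝ) (h0 : (0:ℝ) ∉ Set.uIcc (a + c) (b + c)) :
    IntervalIntegrable (fun x : ℝ => (x + c) ^ r) volume a b := by
  have := (intervalIntegrable_rpow (r := r) (a := a + c) (b := b + c) (Or.inr h0)).comp_add_right c
  simpa using this

private lemma rintI_sub (r a b c : ℝ) (h0 : (0:ℝ) ∉ Set.uIcc (a - c) (b - c)) :
    IntervalIntegrable (fun x : ℝ => (x - c) ^ r) volume a b := by
  have := (intervalIntegrable_rpow (r := r) (a := a - c) (b := b - c) (Or.inr h0)).comp_sub_right c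
  simpa using this

private lemma rintI_sub' (r a b c : ℝ) (hr : -1 < r) :
    IntervalIntegrable (fun x : ℝ => (x - c) ^ r) volume a b := by
  have := (intervalIntegrable_rpow' (r := r) (a := a - c) (b := b - c) hr).comp_sub_right c
  simpa using this

private lemma L1 (γ v x : ℝ) (hγ : 0 < γ) (hvx : x < v) :
    (∫ y in (x-1)..x, (v - y) ^ (-(2+γ))) =
      ((v - x) ^ (-(1+γ)) - (v - x + 1) ^ (-(1+γ))) / (1+γ) := by
  have h1 : (0:ℝ) < 1 + γ := by linarith
  have h2 : -(2+γ) ≠ -1 := by intro h; linarith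
  calc (∫ y in (x-1)..x, (v - y) ^ (-(2+γ)))
      = ∫ t in v - x..v - (x-1), t ^ (-(2+γ)) :=
        intervalIntegral.integral_comp_sub_left (fun t : ℝ => t ^ (-(2+γ))) v
    _ = ((v - (x-1)) ^ (-(2+γ)+1) - (v - x) ^ (-(2+γ)+1)) / (-(2+γ)+1) :=
        integral_rpow (Or.inr ⟨h2, notmem (by linarith) (by linarith)⟩)
    _ = ((v - x) ^ (-(1+γ)) - (v - x + 1) ^ (-(1+γ))) / (1+γ) := by
        rw [show -(2+γ)+1 = -(1+γ) by ring, show v - (x-1) = v - x + 1 by ring,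
          div_eq_div_iff (by intro h; linarith : -(1+γ) ≠ 0) (ne_of_gt h1)]
        ring

private lemma L2 (γ v : ℝ) (hγ : 0 < γ) (hv : 1 < v) :
    (∫ x in (0:ℝ)..1, ∫ y in (x-1)..x, (v - y) ^ (-(2+γ))) =
      ((v-1) ^ (-γ) - 2 * v ^ (-γ) + (v+1) ^ (-γ)) / (γ * (1+γ)) := by
  have h1 : (0:ℝ) < 1 + γ := by linarith
  have hr : -(1+γ) ≠ -1 := by intro h; linarith
  have i1 : IntervalIntegrable (fun t : ℝ => t ^ (-(1+γ))) volume (v-1) (v-0) :=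
    intervalIntegrable_rpow (Or.inr (notmem (by linarith) (by linarith)))
  have i2 : IntervalIntegrable (fun t : ℝ => (t+1) ^ (-(1+γ))) volume (v-1) (v-0) :=
    rintI_add _ _ _ _ (notmem (by linarith) (by linarith))
  calc (∫ x in (0:ℝ)..1, ∫ y in (x-1)..x, (v - y) ^ (-(2+γ)))
      = ∫ x in (0:ℝ)..1,
          (fun t : ℝ => (t ^ (-(1+γ)) - (t+1) ^ (-(1+γ))) / (1+γ)) (v - x) := by
        refine intervalIntegral.integral_congr fun x hx => ?_
        rw [Set.uIcc_of_le (by norm_num : (0:ℝ) ≤ 1)] at hx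
        exact L1 γ v x hγ (lt_of_le_of_lt hx.2 hv)
    _ = ∫ t in (v-1)..(v-0), (t ^ (-(1+γ)) - (t+1) ^ (-(1+γ))) / (1+γ) :=
        intervalIntegral.integral_comp_sub_left (fun t : ℝ => (t ^ (-(1+γ)) - (t+1) ^ (-(1+γ))) / (1+γ)) v
    _ = ((∫ t in (v-1)..(v-0), t ^ (-(1+γ))) - ∫ t in (v-1)..(v-0), (t+1) ^ (-(1+γ))) / (1+γ) := by
        rw [intervalIntegral.integral_div, intervalIntegral.integral_sub i1 i2]
    _ = ((v-1) ^ (-γ) - 2 * v ^ (-γ) + (v+1) ^ (-γ)) / (γ * (1+γ)) := by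
        rw [integral_rpow (Or.inr ⟨hr, notmem (by linarith) (by linarith)⟩),
          rint_add _ _ _ _ (Or.inr ⟨hr, notmem (by linarith) (by linarith)⟩)]
        rw [show -(1+γ)+1 = -γ by ring, show v - (0:ℝ) = v by ring,
          show v - 1 + 1 = v by ring]
        have hne : γ ≠ 0 := ne_of_gt hγ
        have hne2 : 1 + γ ≠ 0 := ne_of_gt h1
        have hneg : (-γ) ≠ 0 := neg_ne_zero.mpr hne
        rw [div_sub_div_same, div_div,
          div_eq_div_iff (mul_ne_zero hneg hne2) (mul_ne_zero hne hne2)]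
        ring

private lemma rintI_add' (r a b c : ℝ) (hr : -1 < r) :
    IntervalIntegrable (fun x : ℝ => (x + c) ^ r) volume a b := by
  have := (intervalIntegrable_rpow' (r := r) (a := a + c) (b := b + c) hr).comp_add_right c
  simpa using this

private lemma L3 (γ u : ℝ) (hγ : 0 < γ) (hγ1 : γ ≠ 1) (hu : 2 < u) :
    (∫ v in (u-1)..u, ((v-1) ^ (-γ) - 2 * v ^ (-γ) + (v+1) ^ (-γ)) / (γ * (1+γ))) =
      ((u+1) ^ (1-γ) - 3 * u ^ (1-γ) + 3 * (u-1) ^ (1-γ) - (u-2) ^ (1-γ))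
        / ((1-γ) * γ * (1+γ)) := by
  have hne : γ ≠ 0 := ne_of_gt hγ
  have h1 : (0:ℝ) < 1 + γ := by linarith
  have hne2 : 1 + γ ≠ 0 := ne_of_gt h1
  have hone : 1 - γ ≠ 0 := sub_ne_zero.mpr (Ne.symm hγ1)
  have hrne : -γ ≠ -1 := by intro h; apply hγ1; linarith
  have iA : IntervalIntegrable (fun v : ℝ => (v-1) ^ (-γ)) volume (u-1) u :=
    rintI_sub _ _ _ _ (notmem (by linarith) (by linarith))
  have iB : IntervalIntegrable (fun v : ℝ => v ^ (-γ)) volume (u-1) u :=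
    intervalIntegrable_rpow (Or.inr (notmem (by linarith) (by linarith)))
  have iC : IntervalIntegrable (fun v : ℝ => (v+1) ^ (-γ)) volume (u-1) u :=
    rintI_add _ _ _ _ (notmem (by linarith) (by linarith))
  rw [intervalIntegral.integral_div,
    intervalIntegral.integral_add (iA.sub (iB.const_mul 2)) iC,
    intervalIntegral.integral_sub iA (iB.const_mul 2),
    intervalIntegral.integral_const_mul,
    rint_sub _ _ _ _ (Or.inr ⟨hrne, notmem (by linarith) (by linarith)⟩),
    integral_rpow (Or.inr ⟨hrne, notmem (by linarith) (by linarith)⟩),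
    rint_add _ _ _ _ (Or.inr ⟨hrne, notmem (by linarith) (by linarith)⟩),
    show -γ + 1 = 1 - γ by ring, show u - 1 - 1 = u - 2 by ring,
    show u - 1 + 1 = u by ring]
  rw [div_eq_div_iff (mul_ne_zero hne hne2)
    (mul_ne_zero (mul_ne_zero hone hne) hne2)]
  field_simp
  ring

private lemma L4 (γ L : ℝ) (hγ : 0 < γ) (hγ2 : γ < 2) (hγ1 : γ ≠ 1) (hL : 2 ≤ L) :
    (∫ u in L..(L+1),
        ((u+1) ^ (1-γ) - 3 * u ^ (1-γ) + 3 * (u-1) ^ (1-γ) - (u-2) ^ (1-γ))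
          / ((1-γ) * γ * (1+γ))) =
      ((L-2) ^ (2-γ) - 4 * (L-1) ^ (2-γ) + 6 * L ^ (2-γ) - 4 * (L+1) ^ (2-γ)
          + (L+2) ^ (2-γ)) / ((2-γ) * ((1-γ) * γ * (1+γ))) := by
  have hne : γ ≠ 0 := ne_of_gt hγ
  have h1 : (0:ℝ) < 1 + γ := by linarith
  have hne2 : 1 + γ ≠ 0 := ne_of_gt h1
  have hone : 1 - γ ≠ 0 := sub_ne_zero.mpr (Ne.symm hγ1)
  have htwo : 2 - γ ≠ 0 := by intro h; linarith
  have hr : (-1:ℝ) < 1 - γ := by linarith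
  have iA : IntervalIntegrable (fun u : ℝ => (u+1) ^ (1-γ)) volume L (L+1) :=
    rintI_add' _ _ _ _ hr
  have iB : IntervalIntegrable (fun u : ℝ => u ^ (1-γ)) volume L (L+1) :=
    intervalIntegrable_rpow' hr
  have iC : IntervalIntegrable (fun u : ℝ => (u-1) ^ (1-γ)) volume L (L+1) :=
    rintI_sub' _ _ _ _ hr
  have iD : IntervalIntegrable (fun u : ℝ => (u-2) ^ (1-γ)) volume L (L+1) :=
    rintI_sub' _ _ _ _ hr
  rw [intervalIntegral.integral_div,
    intervalIntegral.integral_sub ((iA.sub (iB.const_mul 3)).add (iC.const_mul 3)) iD,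
    intervalIntegral.integral_add (iA.sub (iB.const_mul 3)) (iC.const_mul 3),
    intervalIntegral.integral_sub iA (iB.const_mul 3),
    intervalIntegral.integral_const_mul, intervalIntegral.integral_const_mul,
    rint_add _ _ _ _ (Or.inl hr), integral_rpow (Or.inl hr),
    rint_sub _ _ _ _ (Or.inl hr), rint_sub _ _ _ _ (Or.inl hr),
    show 1 - γ + 1 = 2 - γ by ring, show L + 1 + 1 = L + 2 by ring,
    show L + 1 - 1 = L by ring, show L + 1 - 2 = L - 1 by ring]
  rw [div_eq_div_iff (mul_ne_zero (mul_ne_zero hone hne) hne2)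
    (mul_ne_zero htwo (mul_ne_zero (mul_ne_zero hone hne) hne2))]
  field_simp
  ring

theorem rho_gamma_formula (l : ℕ) (hl : 2 ≤ l) (γ : ℝ) (hγ0 : 0 < γ) (hγ2 : γ < 2)
    (hγ1 : γ ≠ 1) :
    (∫ u in (l : ℝ)..((l : ℝ) + 1), ∫ v in (u - 1)..u, ∫ x in (0 : ℝ)..1,
        ∫ y in (x - 1)..x, (v - y) ^ (-(2 + γ))) =
      (|(l : ℝ) - 2| ^ (2 - γ) - 4 * |(l : ℝ) - 1| ^ (2 - γ) + 6 * (l : ℝ) ^ (2 - γ)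
          - 4 * ((l : ℝ) + 1) ^ (2 - γ) + ((l : ℝ) + 2) ^ (2 - γ))
        / ((γ - 2) * (γ - 1) * γ * (γ + 1)) := by
  have hL : (2:ℝ) ≤ (l : ℝ) := by exact_mod_cast hl
  have h1 : (∫ u in (l : ℝ)..((l : ℝ) + 1), ∫ v in (u - 1)..u, ∫ x in (0 : ℝ)..1,
        ∫ y in (x - 1)..x, (v - y) ^ (-(2 + γ))) =
      ∫ u in (l : ℝ)..((l : ℝ) + 1),
        ((u+1) ^ (1-γ) - 3 * u ^ (1-γ) + 3 * (u-1) ^ (1-γ) - (u-2) ^ (1-γ))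
          / ((1-γ) * γ * (1+γ)) := by
    refine intervalIntegral.integral_congr_ae (MeasureTheory.ae_of_all _ fun u hu => ?_)
    rw [Set.uIoc_of_le (by linarith : (l:ℝ) ≤ (l:ℝ) + 1)] at hu
    have hu2 : 2 < u := lt_of_le_of_lt hL hu.1
    have step : (∫ v in (u - 1)..u, ∫ x in (0 : ℝ)..1,
          ∫ y in (x - 1)..x, (v - y) ^ (-(2 + γ))) =
        ∫ v in (u - 1)..u, ((v-1) ^ (-γ) - 2 * v ^ (-γ) + (v+1) ^ (-γ)) / (γ * (1+γ)) := by
      refine intervalIntegral.integral_congr fun v hv => ?_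
      rw [Set.uIcc_of_le (by linarith : u - 1 ≤ u)] at hv
      exact L2 γ v hγ0 (by linarith [hv.1])
    rw [step, L3 γ u hγ0 hγ1 hu2]
  rw [h1, L4 γ (l : ℝ) hγ0 hγ2 hγ1 hL,
    abs_of_nonneg (by linarith : (0:ℝ) ≤ (l:ℝ) - 2),
    abs_of_nonneg (by linarith : (0:ℝ) ≤ (l:ℝ) - 1),
    show (γ - 2) * (γ - 1) * γ * (γ + 1) = (2-γ) * ((1-γ) * γ * (1+γ)) by ring]
end

section
/- For γ = 1 and every integer l ≥ 2, the quadruple integral ρ_1(l) = ∫_l^{l+1} ∫_{u-1}^{u} ∫_0^{1} ∫_{x-1}^{x} (v−y)^{−3} dy dx dv du equals (1/2)((l−2) log(l−2) − 4(l−1) log(l−1) + 6 l log l − 4(l+1) log(l+1) + (l+2) log(l+2)), with the convention 0·log 0 = 0. -/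
open MeasureTheory intervalIntegral Real

-- Step 1: innermost y-integral
lemma rho_lemY (v x : ℝ) (h : 0 < v - x) :
    (∫ y in (x - 1)..x, (v - y) ^ (-3 : ℝ)) =
      ((v - x) ^ (-2 : ℝ) - (v - x + 1) ^ (-2 : ℝ)) / 2 := by
  have h1 : 0 < v - (x - 1) := by linarith
  rw [intervalIntegral.integral_comp_sub_left (fun t => t ^ (-3 : ℝ)) v]
  rw [integral_rpow (Or.inr ⟨by norm_num, Set.notMem_uIcc_of_lt h (by linarith)⟩)]
  have e : v - (x - 1) = v - x + 1 := by ring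
  rw [e]
  norm_num
  ring

-- Step 2: x-integral
lemma rho_lemX (v : ℝ) (h : 1 < v) :
    (∫ x in (0:ℝ)..1, ∫ y in (x - 1)..x, (v - y) ^ (-3 : ℝ)) =
      ((v - 1)⁻¹ - 2 * v⁻¹ + (v + 1)⁻¹) / 2 := by
  rw [intervalIntegral.integral_congr (g := fun x =>
      ((v - x) ^ (-2 : ℝ) - (v - x + 1) ^ (-2 : ℝ)) / 2)]
  · have hint1 : IntervalIntegrable (fun x => (v - x) ^ (-2 : ℝ)) volume 0 1 := by
      apply ContinuousOn.intervalIntegrable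
      apply ContinuousOn.rpow_const
      · exact (by fun_prop : Continuous fun x : ℝ => v - x).continuousOn
      · intro x hx
        rw [Set.uIcc_of_le zero_le_one] at hx
        exact Or.inl (ne_of_gt (by nlinarith [hx.1, hx.2]))
    have hint2 : IntervalIntegrable (fun x => (v - x + 1) ^ (-2 : ℝ)) volume 0 1 := by
      apply ContinuousOn.intervalIntegrable
      apply ContinuousOn.rpow_const
      · exact (by fun_prop : Continuous fun x : ℝ => v - x + 1).continuousOn
      · intro x hx
        rw [Set.uIcc_of_le zero_le_one] at hx
        exact Or.inl (ne_of_gt (by nlinarith [hx.1, hx.2]))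
    rw [intervalIntegral.integral_div, intervalIntegral.integral_sub hint1 hint2]
    have e1 : (∫ x in (0:ℝ)..1, (v - x) ^ (-2 : ℝ)) = (v - 1)⁻¹ - v⁻¹ := by
      rw [intervalIntegral.integral_comp_sub_left (fun t => t ^ (-2 : ℝ)) v]
      rw [integral_rpow (Or.inr ⟨by norm_num,
        Set.notMem_uIcc_of_lt (by linarith) (by linarith)⟩)]
      norm_num
      rw [Real.rpow_neg_one, Real.rpow_neg_one]
      ring
    have e2 : (∫ x in (0:ℝ)..1, (v - x + 1) ^ (-2 : ℝ)) = v⁻¹ - (v + 1)⁻¹ := by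
      have e : ∀ x : ℝ, v - x + 1 = (v + 1) - x := fun x => by ring
      simp_rw [e]
      rw [intervalIntegral.integral_comp_sub_left (fun t => t ^ (-2 : ℝ)) (v + 1)]
      rw [integral_rpow (Or.inr ⟨by norm_num,
        Set.notMem_uIcc_of_lt (by linarith) (by linarith)⟩)]
      norm_num [Real.rpow_neg_one]
      ring_nf
    rw [e1, e2]
    ring
  · intro x hx
    rw [Set.uIcc_of_le zero_le_one] at hx
    exact rho_lemY v x (by linarith [hx.2])

-- Step 3: v-integral
lemma rho_lemV (u : ℝ) (h : 2 < u) :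
    (∫ v in (u - 1)..u, ∫ x in (0:ℝ)..1, ∫ y in (x - 1)..x, (v - y) ^ (-3 : ℝ)) =
      (3 * Real.log (u - 1) - Real.log (u - 2) - 3 * Real.log u + Real.log (u + 1)) / 2 := by
  rw [intervalIntegral.integral_congr (g := fun v =>
      ((v - 1)⁻¹ - 2 * v⁻¹ + (v + 1)⁻¹) / 2)]
  · have hIcc : Set.uIcc (u - 1) u = Set.Icc (u - 1) u := Set.uIcc_of_le (by linarith)
    have hint1 : IntervalIntegrable (fun v : ℝ => (v - 1)⁻¹) volume (u - 1) u := by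
      apply intervalIntegrable_inv
      · intro x hx
        rw [hIcc] at hx
        exact ne_of_gt (by linarith [hx.1])
      · exact (by fun_prop : Continuous fun v : ℝ => v - 1).continuousOn
    have hint2 : IntervalIntegrable (fun v : ℝ => v⁻¹) volume (u - 1) u := by
      apply intervalIntegrable_inv
      · intro x hx
        rw [hIcc] at hx
        exact ne_of_gt (by linarith [hx.1])
      · exact continuous_id.continuousOn
    have hint3 : IntervalIntegrable (fun v : ℝ => (v + 1)⁻¹) volume (u - 1) u := by
      apply intervalIntegrable_inv
      · intro x hx
        rw [hIcc] at hx
        exact ne_of_gt (by linarith [hx.1])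
      · exact (by fun_prop : Continuous fun v : ℝ => v + 1).continuousOn
    rw [intervalIntegral.integral_div,
      intervalIntegral.integral_add ((hint1.sub (hint2.const_mul 2))) hint3,
      intervalIntegral.integral_sub hint1 (hint2.const_mul 2),
      intervalIntegral.integral_const_mul]
    have e1 : (∫ v in (u-1)..u, (v - 1)⁻¹) = Real.log (u - 1) - Real.log (u - 2) := by
      have ee : u - 1 - 1 = u - 2 := by ring
      rw [intervalIntegral.integral_comp_sub_right (fun t => t⁻¹) 1, ee,
        integral_inv_of_pos (by linarith) (by linarith),
        Real.log_div (by linarith) (by linarith)]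
    have e2 : (∫ v in (u-1)..u, v⁻¹) = Real.log u - Real.log (u - 1) := by
      rw [integral_inv_of_pos (by linarith) (by linarith),
        Real.log_div (by linarith) (by linarith)]
    have e3 : (∫ v in (u-1)..u, (v + 1)⁻¹) = Real.log (u + 1) - Real.log u := by
      have e : ∀ v : ℝ, v + 1 = v - (-1) := fun v => by ring
      simp_rw [e]
      have ee : u - 1 - (-1) = u := by ring
      have ee' : u - (-1) = u + 1 := by ring
      rw [intervalIntegral.integral_comp_sub_right (fun t => t⁻¹) (-1), ee, ee',
        integral_inv_of_pos (by linarith) (by linarith),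
        Real.log_div (by linarith) (by linarith)]
    rw [e1, e2, e3]
    ring
  · intro v hv
    rw [Set.uIcc_of_le (by linarith : u - 1 ≤ u)] at hv
    exact rho_lemX v (by linarith [hv.1])

-- log is interval integrable on [0,1]
lemma rho_logInt : IntervalIntegrable Real.log volume 0 1 := by
  rw [intervalIntegrable_iff_integrableOn_Ioc_of_le zero_le_one]
  have hg : IntervalIntegrable (fun x : ℝ => 2 * x ^ (-(1:ℝ)/2)) volume 0 1 :=
    (intervalIntegral.intervalIntegrable_rpow' (by norm_num)).const_mul 2
  rw [intervalIntegrable_iff_integrableOn_Ioc_of_le zero_le_one] at hg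
  apply hg.integrable.mono Real.measurable_log.aestronglyMeasurable
  filter_upwards [ae_restrict_mem measurableSet_Ioc] with x hx
  have hx0 : 0 < x := hx.1
  have hx1 : x ≤ 1 := hx.2
  have hlog : Real.log x ≤ 0 := Real.log_nonpos hx0.le hx1
  have hpow : 0 < x ^ (-(1:ℝ)/2) := Real.rpow_pos_of_pos hx0 _
  rw [Real.norm_eq_abs, Real.norm_eq_abs, abs_of_nonpos hlog,
    abs_of_nonneg (by positivity)]
  have key : Real.log (x ^ (-(1:ℝ)/2)) ≤ x ^ (-(1:ℝ)/2) := by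
    calc Real.log (x ^ (-(1:ℝ)/2)) ≤ x ^ (-(1:ℝ)/2) - 1 :=
          Real.log_le_sub_one_of_pos hpow
      _ ≤ x ^ (-(1:ℝ)/2) := by linarith
  rw [Real.log_rpow hx0] at key
  linarith

-- ∫_0^1 log = -1
lemma rho_logIntegral : (∫ x in (0:ℝ)..1, Real.log x) = -1 := by
  have h := intervalIntegral.integral_eq_sub_of_hasDeriv_right_of_le
    (f := fun x => x * Real.log x - x) (f' := Real.log) zero_le_one
    ((Real.continuous_mul_log.sub continuous_id).continuousOn)
    (fun x hx => by
      have : HasDerivAt (fun x => x * Real.log x - x) (Real.log x) x := by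
        have h1 := (Real.hasDerivAt_mul_log (ne_of_gt hx.1)).sub (hasDerivAt_id x)
        rw [show Real.log x + 1 - 1 = Real.log x by ring] at h1
        exact h1
      exact this.hasDerivWithinAt)
    rho_logInt
  simpa using h

-- shifted log integral over unit interval
lemma rho_logShift (a : ℝ) (ha : 0 ≤ a) :
    (∫ x in a..(a + 1), Real.log x) =
      (a + 1) * Real.log (a + 1) - a * Real.log a - 1 := by
  rcases eq_or_lt_of_le ha with rfl | ha'
  · simpa using rho_logIntegral
  · rw [integral_log]
    ring

lemma rho_logShiftInt (a : ℝ) (ha : 0 ≤ a) :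
    IntervalIntegrable Real.log volume a (a + 1) := by
  rcases eq_or_lt_of_le ha with rfl | ha'
  · simpa using rho_logInt
  · exact intervalIntegrable_log (Set.notMem_uIcc_of_lt ha' (by linarith))

theorem rho_one_formula (l : ℕ) (hl : 2 ≤ l) :
    (∫ u in (l : ℝ)..((l : ℝ) + 1), ∫ v in (u - 1)..u, ∫ x in (0 : ℝ)..1,
        ∫ y in (x - 1)..x, (v - y) ^ (-3 : ℝ)) =
      (1 / 2) * (((l : ℝ) - 2) * Real.log ((l : ℝ) - 2)
          - 4 * ((l : ℝ) - 1) * Real.log ((l : ℝ) - 1)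
          + 6 * (l : ℝ) * Real.log (l : ℝ)
          - 4 * ((l : ℝ) + 1) * Real.log ((l : ℝ) + 1)
          + ((l : ℝ) + 2) * Real.log ((l : ℝ) + 2)) := by
  have hl2 : (2 : ℝ) ≤ (l : ℝ) := by exact_mod_cast hl
  rw [intervalIntegral.integral_congr_ae (g := fun u =>
      (3 * Real.log (u - 1) - Real.log (u - 2) - 3 * Real.log u + Real.log (u + 1)) / 2)
    (Filter.Eventually.of_forall (fun u hu => by
      rw [Set.uIoc_of_le (by linarith : (l:ℝ) ≤ (l:ℝ) + 1)] at hu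
      exact rho_lemV u (by linarith [hu.1])))]
  -- integrability of each piece
  have hint2 : IntervalIntegrable (fun u : ℝ => Real.log (u - 2)) volume l (l + 1) := by
    have := (rho_logShiftInt ((l:ℝ) - 2) (by linarith)).comp_sub_right 2
    have e1 : (l : ℝ) - 2 + 2 = l := by ring
    have e2 : (l : ℝ) - 2 + 1 + 2 = l + 1 := by ring
    rwa [e1, e2] at this
  have hIcc : Set.uIcc (l:ℝ) ((l:ℝ)+1) = Set.Icc (l:ℝ) ((l:ℝ)+1) :=
    Set.uIcc_of_le (by linarith)
  have hint1 : IntervalIntegrable (fun u : ℝ => Real.log (u - 1)) volume l (l + 1) := by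
    apply IntervalIntegrable.log ((by fun_prop : Continuous fun u : ℝ => u - 1).continuousOn)
    intro x hx; rw [hIcc] at hx; exact ne_of_gt (by linarith [hx.1])
  have hint3 : IntervalIntegrable (fun u : ℝ => Real.log u) volume l (l + 1) := by
    apply IntervalIntegrable.log continuous_id.continuousOn
    intro x hx; rw [hIcc] at hx; simp only [id_eq]; exact ne_of_gt (by linarith [hx.1])
  have hint4 : IntervalIntegrable (fun u : ℝ => Real.log (u + 1)) volume l (l + 1) := by
    apply IntervalIntegrable.log ((by fun_prop : Continuous fun u : ℝ => u + 1).continuousOn)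
    intro x hx; rw [hIcc] at hx; exact ne_of_gt (by linarith [hx.1])
  rw [intervalIntegral.integral_div,
    intervalIntegral.integral_add (((hint1.const_mul 3).sub hint2).sub (hint3.const_mul 3)) hint4,
    intervalIntegral.integral_sub ((hint1.const_mul 3).sub hint2) (hint3.const_mul 3),
    intervalIntegral.integral_sub (hint1.const_mul 3) hint2,
    intervalIntegral.integral_const_mul, intervalIntegral.integral_const_mul]
  have eA : (∫ u in (l:ℝ)..((l:ℝ)+1), Real.log (u - 1)) =
      (l:ℝ) * Real.log l - ((l:ℝ) - 1) * Real.log ((l:ℝ) - 1) - 1 := by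
    rw [intervalIntegral.integral_comp_sub_right Real.log 1]
    have e1 : (l:ℝ) + 1 - 1 = ((l:ℝ) - 1) + 1 := by ring
    rw [e1, rho_logShift ((l:ℝ) - 1) (by linarith)]
    ring_nf
  have eB : (∫ u in (l:ℝ)..((l:ℝ)+1), Real.log (u - 2)) =
      ((l:ℝ) - 1) * Real.log ((l:ℝ) - 1) - ((l:ℝ) - 2) * Real.log ((l:ℝ) - 2) - 1 := by
    rw [intervalIntegral.integral_comp_sub_right Real.log 2]
    have e1 : (l:ℝ) + 1 - 2 = ((l:ℝ) - 2) + 1 := by ring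
    rw [e1, rho_logShift ((l:ℝ) - 2) (by linarith)]
    ring_nf
  have eC : (∫ u in (l:ℝ)..((l:ℝ)+1), Real.log u) =
      ((l:ℝ) + 1) * Real.log ((l:ℝ) + 1) - (l:ℝ) * Real.log l - 1 := by
    rw [rho_logShift (l:ℝ) (by linarith)]
  have eD : (∫ u in (l:ℝ)..((l:ℝ)+1), Real.log (u + 1)) =
      ((l:ℝ) + 2) * Real.log ((l:ℝ) + 2) - ((l:ℝ) + 1) * Real.log ((l:ℝ) + 1) - 1 := by
    rw [intervalIntegral.integral_comp_add_right Real.log 1]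
    have e1 : (l:ℝ) + 1 + 1 = ((l:ℝ) + 1) + 1 := by ring
    rw [e1, rho_logShift ((l:ℝ) + 1) (by linarith)]
    ring_nf
  rw [eA, eB, eC, eD]
  ring
end

section
/- For every γ with 0 < γ < 2 there exists a constant K > 0 such that for all integers l ≥ 3, |ρ_γ(l)| ≤ K l^{−2−γ}; consequently, the series Σ_{l≥2} ρ_γ(l)^2 converges. -/
open MeasureTheory intervalIntegral

/-- The quantity `ρ_γ(l)` from the paper. -/
noncomputable def rhoGamma (γ : ℝ) (l : ℕ) : ℝ :=
  ∫ u in (l : ℝ)..((l : ℝ) + 1), ∫ v in (u - 1)..u, ∫ x in (0 : ℝ)..1,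
    ∫ y in (x - 1)..x, (v - y) ^ (-(2 + γ))

lemma rhoGamma_abs_le (γ : ℝ) (hγ0 : 0 < γ) (l : ℕ) (hl : 3 ≤ l) :
    |rhoGamma γ l| ≤ ((l : ℝ) - 2) ^ (-(2 + γ)) := by
  have hl3 : (3 : ℝ) ≤ (l : ℝ) := by exact_mod_cast hl
  set c : ℝ := ((l : ℝ) - 2) ^ (-(2 + γ)) with hc_def
  have hcpos : 0 < c := Real.rpow_pos_of_pos (by linarith) _
  -- innermost bound
  have hbound : ∀ u ∈ Set.uIoc (l : ℝ) ((l : ℝ) + 1), ∀ v ∈ Set.uIoc (u - 1) u,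
      ∀ x ∈ Set.uIoc (0 : ℝ) 1, ∀ y ∈ Set.uIoc (x - 1) x,
      ‖(v - y) ^ (-(2 + γ))‖ ≤ c := by
    intro u hu v hv x hx y hy
    rw [Set.uIoc_of_le (by linarith : (l : ℝ) ≤ (l : ℝ) + 1)] at hu
    rw [Set.uIoc_of_le (by linarith : u - 1 ≤ u)] at hv
    rw [Set.uIoc_of_le (by norm_num : (0 : ℝ) ≤ 1)] at hx
    rw [Set.uIoc_of_le (by linarith : x - 1 ≤ x)] at hy
    have h1 : (l : ℝ) - 2 ≤ v - y := by
      have := hu.1; have := hv.1; have := hx.2; have := hy.2; linarith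
    have h2 : (0 : ℝ) < v - y := by linarith
    rw [Real.norm_eq_abs, abs_of_nonneg (Real.rpow_nonneg h2.le _)]
    exact Real.rpow_le_rpow_of_nonpos (by linarith) h1 (by linarith)
  rw [rhoGamma, ← Real.norm_eq_abs]
  calc ‖∫ u in (l : ℝ)..((l : ℝ) + 1), ∫ v in (u - 1)..u, ∫ x in (0 : ℝ)..1,
        ∫ y in (x - 1)..x, (v - y) ^ (-(2 + γ))‖
      ≤ c * |(l : ℝ) + 1 - l| := by
        apply intervalIntegral.norm_integral_le_of_norm_le_const
        intro u hu
        calc ‖∫ v in (u - 1)..u, ∫ x in (0 : ℝ)..1,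
              ∫ y in (x - 1)..x, (v - y) ^ (-(2 + γ))‖
            ≤ c * |u - (u - 1)| := by
              apply intervalIntegral.norm_integral_le_of_norm_le_const
              intro v hv
              calc ‖∫ x in (0 : ℝ)..1, ∫ y in (x - 1)..x, (v - y) ^ (-(2 + γ))‖
                  ≤ c * |(1 : ℝ) - 0| := by
                    apply intervalIntegral.norm_integral_le_of_norm_le_const
                    intro x hx
                    calc ‖∫ y in (x - 1)..x, (v - y) ^ (-(2 + γ))‖
                        ≤ c * |x - (x - 1)| := by
                          apply intervalIntegral.norm_integral_le_of_norm_le_const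
                          intro y hy
                          exact hbound u hu v hv x hx y hy
                      _ = c := by norm_num
                _ = c := by norm_num
          _ = c := by norm_num
    _ = c := by norm_num

theorem rho_gamma_bound_and_summable (γ : ℝ) (hγ0 : 0 < γ) (hγ2 : γ < 2) :
    (∃ K > 0, ∀ l : ℕ, 3 ≤ l → |rhoGamma γ l| ≤ K * (l : ℝ) ^ (-(2 + γ))) ∧
      Summable (fun l : ℕ => (rhoGamma γ (l + 2)) ^ 2) := by
  have key : ∀ l : ℕ, 3 ≤ l → |rhoGamma γ l| ≤ 81 * (l : ℝ) ^ (-(2 + γ)) := by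
    intro l hl
    have hl3 : (3 : ℝ) ≤ (l : ℝ) := by exact_mod_cast hl
    refine (rhoGamma_abs_le γ hγ0 l hl).trans ?_
    have h1 : ((l : ℝ) / 3) ≤ (l : ℝ) - 2 := by linarith
    have h2 : ((l : ℝ) - 2) ^ (-(2 + γ)) ≤ ((l : ℝ) / 3) ^ (-(2 + γ)) :=
      Real.rpow_le_rpow_of_nonpos (by linarith) h1 (by linarith)
    refine h2.trans ?_
    have h3 : ((l : ℝ) / 3) ^ (-(2 + γ)) = (l : ℝ) ^ (-(2 + γ)) * (3 : ℝ) ^ (2 + γ) := by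
      rw [div_eq_mul_inv, Real.mul_rpow (by linarith) (by norm_num),
        Real.inv_rpow (by norm_num), ← Real.rpow_neg (by norm_num), neg_neg]
    rw [h3, mul_comm]
    have h4 : (3 : ℝ) ^ (2 + γ) ≤ 81 := by
      calc (3 : ℝ) ^ (2 + γ) ≤ (3 : ℝ) ^ (4 : ℝ) :=
            Real.rpow_le_rpow_of_exponent_le (by norm_num) (by linarith)
        _ = 81 := by
            rw [show (4 : ℝ) = ((4 : ℕ) : ℝ) by norm_num, Real.rpow_natCast]; norm_num
    have h5 : (0 : ℝ) ≤ (l : ℝ) ^ (-(2 + γ)) := Real.rpow_nonneg (by linarith) _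
    exact mul_le_mul_of_nonneg_right h4 h5
  constructor
  · exact ⟨81, by norm_num, key⟩
  · rw [← summable_nat_add_iff 1]
    have hsum : Summable (fun n : ℕ => 81 ^ 2 * ((n : ℝ) + 3) ^ (-2 : ℝ)) := by
      apply Summable.mul_left
      have : Summable (fun n : ℕ => ((n + 3 : ℕ) : ℝ) ^ (-2 : ℝ)) :=
        (summable_nat_add_iff (f := fun n : ℕ => ((n : ℕ) : ℝ) ^ (-2 : ℝ)) 3).mpr
          (Real.summable_nat_rpow.mpr (by norm_num))
      simpa [Nat.cast_add] using this
    apply Summable.of_nonneg_of_le (fun n => sq_nonneg _) _ hsum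
    intro n
    have hn3 : 3 ≤ n + 1 + 2 := by omega
    have hb := key (n + 1 + 2) hn3
    have hcast : ((n + 1 + 2 : ℕ) : ℝ) = (n : ℝ) + 3 := by push_cast; ring
    rw [hcast] at hb
    have hpos : (0 : ℝ) < (n : ℝ) + 3 := by positivity
    have h1 : (rhoGamma γ (n + 1 + 2)) ^ 2 ≤ (81 * ((n : ℝ) + 3) ^ (-(2 + γ))) ^ 2 := by
      rw [← sq_abs]
      apply pow_le_pow_left₀ (abs_nonneg _) hb
    refine h1.trans ?_
    rw [mul_pow, ← Real.rpow_natCast (((n : ℝ) + 3) ^ (-(2 + γ))) 2,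
      ← Real.rpow_mul hpos.le]
    apply mul_le_mul_of_nonneg_left _ (by positivity)
    apply Real.rpow_le_rpow_of_exponent_le (by linarith)
    push_cast; nlinarith
end

section
/- Laplace-method asymptotics: let H : ℝ → ℝ be C² and π-periodic with a unique minimum H(θ_*) = m on [θ_*−π/2, θ_*+π/2], strictly decreasing on (θ_*−π/2, θ_*), strictly increasing on (θ_*, θ_*+π/2), with H''(θ_*) > 0, and let Λ be continuous, positive and π-periodic. Then as h → 0^+, ∫_0^π Λ(θ) h^{2(H(θ)−m)} dθ ∼ Λ(θ_*) √(π / (H''(θ_*) · (−log h))). -/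
open MeasureTheory intervalIntegral Real Filter

lemma lma_double_mvt (f : ℝ → ℝ) (hf : ContDiff ℝ 2 f) (x₀ x : ℝ) (hx : x₀ ≠ x)
    (hd : deriv f x₀ = 0) :
    ∃ η ∈ Set.uIoo x₀ x, ∃ r : ℝ, 0 < r ∧ r ≤ (x - x₀) ^ 2 ∧
      f x - f x₀ = deriv (deriv f) η * r := by
  have hdf : Differentiable ℝ f := hf.differentiable (by norm_num)
  have hdf2 : Differentiable ℝ (deriv f) := by
    have h2 : ContDiff ℝ ((1:WithTop ℕ∞)+1) f := by norm_num; exact hf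
    exact (contDiff_succ_iff_deriv.mp h2).2.2.differentiable one_ne_zero
  rcases hx.lt_or_gt with h | h
  · -- x₀ < x
    obtain ⟨ξ, hξ, hξeq⟩ := exists_hasDerivAt_eq_slope f (deriv f) h
      (hdf.continuous.continuousOn) (fun y _ => (hdf y).hasDerivAt)
    obtain ⟨η, hη, hηeq⟩ := exists_hasDerivAt_eq_slope (deriv f) (deriv (deriv f)) hξ.1
      (hdf2.continuous.continuousOn) (fun y _ => (hdf2 y).hasDerivAt)
    refine ⟨η, ?_, (ξ - x₀) * (x - x₀), ?_, ?_, ?_⟩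
    · rw [Set.uIoo_of_lt h]; exact ⟨hη.1, hη.2.trans hξ.2⟩
    · have := sub_pos.mpr hξ.1; have := sub_pos.mpr h; positivity
    · have h1 : ξ - x₀ ≤ x - x₀ := by linarith [hξ.2]
      have h2 : 0 ≤ x - x₀ := by linarith
      nlinarith [sub_pos.mpr hξ.1]
    · have e1 : deriv f ξ = (f x - f x₀) / (x - x₀) := hξeq
      have e2 : deriv (deriv f) η = (deriv f ξ - deriv f x₀) / (ξ - x₀) := hηeq
      rw [hd, sub_zero] at e2
      have hx0 : x - x₀ ≠ 0 := by linarith [sub_pos.mpr h]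
      have hξ0 : ξ - x₀ ≠ 0 := by linarith [sub_pos.mpr hξ.1]
      field_simp at e1 e2 ⊢
      nlinarith [e1, e2]
  · -- x < x₀
    obtain ⟨ξ, hξ, hξeq⟩ := exists_hasDerivAt_eq_slope f (deriv f) h
      (hdf.continuous.continuousOn) (fun y _ => (hdf y).hasDerivAt)
    obtain ⟨η, hη, hηeq⟩ := exists_hasDerivAt_eq_slope (deriv f) (deriv (deriv f)) hξ.2
      (hdf2.continuous.continuousOn) (fun y _ => (hdf2 y).hasDerivAt)
    refine ⟨η, ?_, (x₀ - ξ) * (x₀ - x), ?_, ?_, ?_⟩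
    · rw [Set.uIoo_of_gt h]; exact ⟨hξ.1.trans hη.1, hη.2⟩
    · have := sub_pos.mpr hξ.2; have := sub_pos.mpr h; positivity
    · nlinarith [sub_pos.mpr hξ.1, sub_pos.mpr h]
    · have e1 : deriv f ξ = (f x₀ - f x) / (x₀ - x) := hξeq
      have e2 : deriv (deriv f) η = (deriv f x₀ - deriv f ξ) / (x₀ - ξ) := hηeq
      rw [hd, zero_sub] at e2
      have hx0 : x₀ - x ≠ 0 := by linarith [sub_pos.mpr h]
      have hξ0 : x₀ - ξ ≠ 0 := by linarith [sub_pos.mpr hξ.2]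
      field_simp at e1 e2 ⊢
      nlinarith [e1, e2]

lemma lma_sqrt_atTop : Tendsto Real.sqrt atTop atTop := by
  apply tendsto_atTop_atTop.mpr
  intro b
  exact ⟨b ^ 2, fun a ha => le_trans (by rw [Real.sqrt_sq_eq_abs]; exact le_abs_self b)
    (Real.sqrt_le_sqrt ha)⟩

lemma lma_gauss (b δ : ℝ) (hb : 0 < b) (hδ : 0 < δ) :
    Tendsto (fun l : ℝ => Real.sqrt l * ∫ t in (-δ)..δ, Real.exp (-(l * b * t ^ 2)))
      atTop (nhds (Real.sqrt (π / b))) := by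
  have hint : Integrable (fun u : ℝ => Real.exp (-b * u ^ 2)) := integrable_exp_neg_mul_sq hb
  have key : Tendsto (fun l : ℝ => ∫ u in (-(Real.sqrt l * δ))..(Real.sqrt l * δ),
      Real.exp (-b * u ^ 2)) atTop (nhds (Real.sqrt (π / b))) := by
    rw [← integral_gaussian b]
    have hT : Tendsto (fun l : ℝ => Real.sqrt l * δ) atTop atTop :=
      (lma_sqrt_atTop.atTop_mul_const hδ)
    exact intervalIntegral_tendsto_integral hint (tendsto_neg_atBot_iff.mpr hT) hT
  apply key.congr'
  filter_upwards [eventually_gt_atTop (0:ℝ)] with l hl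
  have hsl : (0:ℝ) < Real.sqrt l := Real.sqrt_pos.mpr hl
  have : (∫ t in (-δ)..δ, Real.exp (-(l * b * t ^ 2)))
      = (Real.sqrt l)⁻¹ • ∫ u in (Real.sqrt l * -δ)..(Real.sqrt l * δ), Real.exp (-b * u ^ 2) := by
    rw [← intervalIntegral.integral_comp_mul_left (fun u => Real.exp (-b * u ^ 2)) hsl.ne']
    congr 1 with t
    rw [mul_pow, Real.sq_sqrt hl.le]
    ring_nf
  rw [this, smul_eq_mul, mul_neg]
  field_simp

lemma lma_sqrt_exp (c : ℝ) (hc : 0 < c) :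
    Tendsto (fun l : ℝ => Real.sqrt l * Real.exp (-(c * l))) atTop (nhds 0) := by
  have h1 : Tendsto (fun l : ℝ => c⁻¹ * ((c * l) ^ 1 * Real.exp (-(c * l)))) atTop (nhds 0) := by
    have := (Real.tendsto_pow_mul_exp_neg_atTop_nhds_zero 1).comp
      (tendsto_id.const_mul_atTop hc)
    simpa using this.const_mul c⁻¹
  have h2 : ∀ᶠ l : ℝ in atTop, Real.sqrt l * Real.exp (-(c * l))
      ≤ c⁻¹ * ((c * l) ^ 1 * Real.exp (-(c * l))) := by
    filter_upwards [eventually_ge_atTop (1:ℝ)] with l hl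
    have h3 : Real.sqrt l ≤ l := by
      nth_rewrite 2 [← Real.sqrt_sq (by linarith : (0:ℝ) ≤ l)]
      exact Real.sqrt_le_sqrt (by nlinarith)
    have : c⁻¹ * ((c * l) ^ 1 * Real.exp (-(c * l))) = l * Real.exp (-(c * l)) := by
      field_simp
    rw [this]
    exact mul_le_mul_of_nonneg_right h3 (Real.exp_pos _).le
  have h0 : ∀ᶠ l : ℝ in atTop, 0 ≤ Real.sqrt l * Real.exp (-(c * l)) := by
    filter_upwards with l; positivity
  exact tendsto_of_tendsto_of_tendsto_of_le_of_le' tendsto_const_nhds h1 h0 h2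

lemma lma_shift (H : ℝ → ℝ) (θs c : ℝ) (hH : ContDiff ℝ 2 H) (hd : deriv H θs = 0)
    (θ : ℝ) (hθ : θs ≠ θ) :
    ∃ η ∈ Set.uIoo θs θ, ∃ r : ℝ, 0 < r ∧ r ≤ (θ - θs) ^ 2 ∧
      H θ - H θs - c * (θ - θs) ^ 2 = (deriv (deriv H) η - 2 * c) * r := by
  set φ : ℝ → ℝ := fun t => H t - c * (t - θs) ^ 2 with hφ
  have hq : ∀ t : ℝ, HasDerivAt (fun t : ℝ => c * (t - θs) ^ 2) (c * (2 * (t - θs))) t := by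
    intro t
    have := (((hasDerivAt_id t).sub_const θs).pow 2).const_mul c
    refine this.congr_deriv ?_
    simp
  have hdH : Differentiable ℝ H := hH.differentiable (by norm_num)
  have hdH2 : Differentiable ℝ (deriv H) := by
    have h2 : ContDiff ℝ ((1:WithTop ℕ∞)+1) H := by norm_num; exact hH
    exact (contDiff_succ_iff_deriv.mp h2).2.2.differentiable one_ne_zero
  have hφd : ∀ t, HasDerivAt φ (deriv H t - c * (2 * (t - θs))) t :=
    fun t => ((hdH t).hasDerivAt).sub (hq t)
  have hφderiv : deriv φ = fun t => deriv H t - c * (2 * (t - θs)) :=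
    funext fun t => (hφd t).deriv
  have hφC2 : ContDiff ℝ 2 φ :=
    hH.sub (contDiff_const.mul ((contDiff_id.sub contDiff_const).pow 2))
  have hφd0 : deriv φ θs = 0 := by rw [hφderiv]; simp [hd]
  obtain ⟨η, hη, r, hr0, hrle, heq⟩ := lma_double_mvt φ hφC2 θs θ hθ hφd0
  refine ⟨η, hη, r, hr0, hrle, ?_⟩
  have hdd : deriv (deriv φ) η = deriv (deriv H) η - 2 * c := by
    rw [hφderiv]
    have : HasDerivAt (fun t => deriv H t - c * (2 * (t - θs))) (deriv (deriv H) η - 2 * c) η := by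
      have h1 : HasDerivAt (fun t : ℝ => c * (2 * (t - θs))) (2 * c) η := by
        have := (((hasDerivAt_id η).sub_const θs).const_mul 2).const_mul c
        refine this.congr_deriv ?_; ring
      exact ((hdH2 η).hasDerivAt).sub h1
    exact this.deriv
  have hφval : φ θ - φ θs = H θ - H θs - c * (θ - θs) ^ 2 := by simp [hφ]; ring
  rw [← hφval, heq, hdd]

lemma lma_quad (H : ℝ → ℝ) (θs : ℝ) (hH : ContDiff ℝ 2 H) (hd : deriv H θs = 0)
    (s : ℝ) (hs : 0 < s) :
    ∃ δ : ℝ, 0 < δ ∧ ∀ θ : ℝ, |θ - θs| ≤ δ →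
      (iteratedDeriv 2 H θs - s) / 2 * (θ - θs) ^ 2 ≤ H θ - H θs ∧
      H θ - H θs ≤ (iteratedDeriv 2 H θs + s) / 2 * (θ - θs) ^ 2 := by
  have hit : iteratedDeriv 2 H = deriv (deriv H) := by
    rw [iteratedDeriv_succ, iteratedDeriv_one]
  have hcont : Continuous (deriv (deriv H)) := by
    rw [← hit]; exact hH.continuous_iteratedDeriv 2 le_rfl
  obtain ⟨δ', hδ'0, hδ'⟩ :=
    Metric.continuousAt_iff.mp (hcont.continuousAt (x := θs)) s hs
  refine ⟨δ' / 2, by linarith, fun θ hθ => ?_⟩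
  rcases eq_or_ne θs θ with rfl | hne
  · simp
  have hball : ∀ η ∈ Set.uIoo θs θ, |deriv (deriv H) η - iteratedDeriv 2 H θs| ≤ s := by
    intro η hη
    have h1 : |η - θs| ≤ |θ - θs| := by
      rcases lt_or_gt_of_ne hne with h | h
      · rw [Set.uIoo_of_lt h] at hη
        rw [abs_of_pos (by linarith [hη.1] : (0:ℝ) < η - θs),
          abs_of_pos (by linarith : (0:ℝ) < θ - θs)]
        linarith [hη.2]
      · rw [Set.uIoo_of_gt h] at hη
        rw [abs_of_neg (by linarith [hη.2] : η - θs < 0),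
          abs_of_neg (by linarith : θ - θs < 0)]
        linarith [hη.1]
    have h2 : dist η θs < δ' := by
      rw [Real.dist_eq]; calc |η - θs| ≤ |θ - θs| := h1
        _ ≤ δ' / 2 := hθ
        _ < δ' := by linarith
    have := hδ' h2
    rw [Real.dist_eq] at this
    rw [hit]
    exact this.le
  constructor
  · obtain ⟨η, hη, r, hr0, hrle, heq⟩ :=
      lma_shift H θs ((iteratedDeriv 2 H θs - s) / 2) hH hd θ hne
    have hb := hball η hη
    have : 0 ≤ (deriv (deriv H) η - 2 * ((iteratedDeriv 2 H θs - s) / 2)) * r := by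
      apply mul_nonneg _ hr0.le
      rw [abs_le] at hb; linarith [hb.1]
    linarith [heq ▸ this]
  · obtain ⟨η, hη, r, hr0, hrle, heq⟩ :=
      lma_shift H θs ((iteratedDeriv 2 H θs + s) / 2) hH hd θ hne
    have hb := hball η hη
    have : (deriv (deriv H) η - 2 * ((iteratedDeriv 2 H θs + s) / 2)) * r ≤ 0 := by
      apply mul_nonpos_of_nonpos_of_nonneg _ hr0.le
      rw [abs_le] at hb; linarith [hb.2]
    linarith [heq ▸ this]

set_option maxHeartbeats 1000000 in
theorem lma_key (H Λ : ℝ → ℝ) (θs : ℝ) (hH : ContDiff ℝ 2 H) (hΛcont : Continuous Λ)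
    (hΛpos : ∀ θ, 0 < Λ θ)
    (hmin : ∀ θ ∈ Set.Icc (θs - π / 2) (θs + π / 2), θ ≠ θs → H θs < H θ)
    (hH2 : 0 < iteratedDeriv 2 H θs) :
    Tendsto (fun l : ℝ => Real.sqrt l *
        ∫ θ in (θs - π / 2)..(θs + π / 2), Λ θ * Real.exp (-(l * (H θ - H θs))))
      atTop (nhds (Λ θs * Real.sqrt (2 * π / iteratedDeriv 2 H θs))) := by
  have pi_pos := Real.pi_pos
  set a := iteratedDeriv 2 H θs with ha
  set m := H θs with hm
  set L := Λ θs with hL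
  set T := L * Real.sqrt (2 * π / a) with hT
  have hLpos : 0 < L := hΛpos θs
  -- derivative vanishes
  have hd0 : deriv H θs = 0 := by
    apply IsLocalMin.deriv_eq_zero
    have hsub : Set.Icc (θs - π / 2) (θs + π / 2) ∈ nhds θs :=
      Icc_mem_nhds (by linarith) (by linarith)
    filter_upwards [hsub] with θ hθ
    rcases eq_or_ne θ θs with rfl | h
    · exact le_rfl
    · exact (hmin θ hθ h).le
  rw [Metric.tendsto_nhds]
  intro ε hε
  -- choose s
  have hgu : Tendsto (fun s : ℝ => (L + s) * Real.sqrt (2 * π / (a - s))) (nhds 0) (nhds T) := by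
    have hc1 : ContinuousAt (fun s : ℝ => (L + s) * Real.sqrt (2 * π / (a - s))) 0 := by
      apply ContinuousAt.mul
      · exact continuousAt_const.add continuousAt_id
      · exact Real.continuous_sqrt.continuousAt.comp
          (continuousAt_const.div (continuousAt_const.sub continuousAt_id)
            (by simpa using hH2.ne'))
    simpa using hc1.tendsto
  have hgv : Tendsto (fun s : ℝ => (L - s) * Real.sqrt (2 * π / (a + s))) (nhds 0) (nhds T) := by
    have hc1 : ContinuousAt (fun s : ℝ => (L - s) * Real.sqrt (2 * π / (a + s))) 0 := by
      apply ContinuousAt.mul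
      · exact continuousAt_const.sub continuousAt_id
      · exact Real.continuous_sqrt.continuousAt.comp
          (continuousAt_const.div (continuousAt_const.add continuousAt_id)
            (by simpa using hH2.ne'))
    simpa using hc1.tendsto
  have hev : ∀ᶠ s in nhdsWithin (0:ℝ) (Set.Ioi 0),
      ((L + s) * Real.sqrt (2 * π / (a - s)) < T + ε / 2 ∧
       T - ε / 2 < (L - s) * Real.sqrt (2 * π / (a + s)) ∧ 0 < s ∧ s < a) := by
    have hgu' : Tendsto (fun s : ℝ => (L + s) * Real.sqrt (2 * π / (a - s)))
        (nhdsWithin (0:ℝ) (Set.Ioi 0)) (nhds T) := hgu.mono_left nhdsWithin_le_nhds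
    have hgv' : Tendsto (fun s : ℝ => (L - s) * Real.sqrt (2 * π / (a + s)))
        (nhdsWithin (0:ℝ) (Set.Ioi 0)) (nhds T) := hgv.mono_left nhdsWithin_le_nhds
    have e1 := hgu'.eventually_lt_const (by linarith : T < T + ε / 2)
    have e2 := hgv'.eventually_const_lt (by linarith : T - ε / 2 < T)
    have e3 : ∀ᶠ s : ℝ in nhdsWithin (0:ℝ) (Set.Ioi 0), 0 < s := eventually_mem_nhdsWithin
    have e4 : ∀ᶠ s : ℝ in nhdsWithin (0:ℝ) (Set.Ioi 0), s < a :=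
      (eventually_lt_nhds hH2).filter_mono nhdsWithin_le_nhds
    filter_upwards [e1, e2, e3, e4] with s h1 h2 h3 h4
    exact ⟨h1, h2, h3, h4⟩
  obtain ⟨s, hu, hv, hs0, hsa⟩ := hev.exists
  -- choose δ
  obtain ⟨δ₁, hδ₁0, hquad⟩ := lma_quad H θs hH hd0 s hs0
  obtain ⟨δ₂', hδ₂'0, hδ₂'⟩ := Metric.continuousAt_iff.mp (hΛcont.continuousAt (x := θs)) s hs0
  set δ : ℝ := min (min δ₁ (δ₂' / 2)) (π / 4) with hδdef
  have hδ0 : 0 < δ := lt_min (lt_min hδ₁0 (by linarith)) (by linarith)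
  have hδπ : δ < π / 2 := lt_of_le_of_lt (min_le_right _ _) (by linarith)
  have hδ₁le : δ ≤ δ₁ := le_trans (min_le_left _ _) (min_le_left _ _)
  have hδ₂le : δ ≤ δ₂' / 2 := le_trans (min_le_left _ _) (min_le_right _ _)
  have hΛnear : ∀ θ : ℝ, |θ - θs| ≤ δ → L - s ≤ Λ θ ∧ Λ θ ≤ L + s := by
    intro θ hθ
    have : dist θ θs < δ₂' := by
      rw [Real.dist_eq]
      calc |θ - θs| ≤ δ₂' / 2 := le_trans hθ hδ₂le
        _ < δ₂' := by linarith
    have := (hδ₂' this).le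
    rw [Real.dist_eq, abs_le] at this
    exact ⟨by linarith [this.1], by linarith [this.2]⟩
  -- tail constant
  set K : Set ℝ := Set.Icc (θs - π / 2) (θs + π / 2) \ Set.Ioo (θs - δ) (θs + δ) with hK
  have hKcompact : IsCompact K := isCompact_Icc.diff isOpen_Ioo
  have hKne : K.Nonempty := by
    refine ⟨θs + π / 2, ⟨⟨by linarith, le_rfl⟩, ?_⟩⟩
    rw [Set.mem_Ioo]; push_neg
    intro _
    linarith
  obtain ⟨θ₀, hθ₀K, hθ₀min⟩ := hKcompact.exists_isMinOn hKne hH.continuous.continuousOn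
  set c : ℝ := H θ₀ - m with hc
  have hc0 : 0 < c := by
    have hθ₀ne : θ₀ ≠ θs := by
      intro hcontra
      exact hθ₀K.2 (by rw [hcontra]; exact Set.mem_Ioo.mpr ⟨by linarith, by linarith⟩)
    have := hmin θ₀ hθ₀K.1 hθ₀ne
    simpa [hc, hm] using sub_pos.mpr this
  have htail : ∀ θ ∈ K, c ≤ H θ - m := fun θ hθ => by
    have h' : H θ₀ ≤ H θ := hθ₀min hθ
    simp only [hc]
    linarith
  -- Λ max
  obtain ⟨θ₁, hθ₁mem, hθ₁max⟩ := isCompact_Icc.exists_isMaxOn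
    (⟨θs, by constructor <;> [linarith; linarith]⟩ :
      (Set.Icc (θs - π / 2) (θs + π / 2)).Nonempty) hΛcont.continuousOn
  set CΛ : ℝ := Λ θ₁ with hCΛ
  have hCΛpos : 0 < CΛ := hΛpos θ₁
  have hΛle : ∀ θ ∈ Set.Icc (θs - π / 2) (θs + π / 2), Λ θ ≤ CΛ := fun θ hθ => hθ₁max hθ
  -- Gaussian pieces
  set b₁ : ℝ := (a - s) / 2 with hb₁def
  set b₂ : ℝ := (a + s) / 2 with hb₂def
  have hb₁ : 0 < b₁ := by simp only [hb₁def]; linarith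
  have hb₂ : 0 < b₂ := by simp only [hb₂def]; linarith
  have hsq1 : Real.sqrt (π / b₁) = Real.sqrt (2 * π / (a - s)) := by
    congr 1
    rw [hb₁def]
    field_simp
  have hsq2 : Real.sqrt (π / b₂) = Real.sqrt (2 * π / (a + s)) := by
    congr 1
    rw [hb₂def]
    field_simp
  have G₁ := (lma_gauss b₁ δ hb₁ hδ0).const_mul (L + s)
  have G₂ := (lma_gauss b₂ δ hb₂ hδ0).const_mul (L - s)
  rw [hsq1] at G₁
  rw [hsq2] at G₂
  have E1 : ∀ᶠ l : ℝ in atTop,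
      (L + s) * (Real.sqrt l * ∫ t in (-δ)..δ, Real.exp (-(l * b₁ * t ^ 2))) < T + ε / 2 :=
    G₁.eventually_lt_const hu
  have E2 : ∀ᶠ l : ℝ in atTop,
      T - ε / 2 < (L - s) * (Real.sqrt l * ∫ t in (-δ)..δ, Real.exp (-(l * b₂ * t ^ 2))) :=
    G₂.eventually_const_lt hv
  have E3 : ∀ᶠ l : ℝ in atTop,
      CΛ * π * (Real.sqrt l * Real.exp (-(c * l))) < ε / 2 := by
    have := ((lma_sqrt_exp c hc0).const_mul (CΛ * π)).eventually_lt_const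
      (show (CΛ * π) * 0 < ε / 2 by simpa using by linarith)
    simpa using this
  filter_upwards [E1, E2, E3, eventually_gt_atTop (0:ℝ)] with l h1 h2 h3 hl0
  -- main estimate for fixed l
  have hsl : (0:ℝ) ≤ Real.sqrt l := Real.sqrt_nonneg l
  have intg : ∀ (u v : ℝ), IntervalIntegrable (fun θ => Λ θ * Real.exp (-(l * (H θ - m)))) volume u v :=
    fun u v => (hΛcont.mul (Real.continuous_exp.comp
      (continuous_const.mul (hH.continuous.sub continuous_const)).neg)).intervalIntegrable u v
  have intg1 : ∀ (u v : ℝ) (b : ℝ),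
      IntervalIntegrable (fun θ => Real.exp (-(l * b * (θ - θs) ^ 2))) volume u v :=
    fun u v b => (Real.continuous_exp.comp
      (continuous_const.mul ((continuous_id.sub continuous_const).pow 2)).neg).intervalIntegrable u v
  have hsplit : (∫ θ in (θs - π / 2)..(θs + π / 2), Λ θ * Real.exp (-(l * (H θ - m))))
      = (∫ θ in (θs - π / 2)..(θs - δ), Λ θ * Real.exp (-(l * (H θ - m))))
      + (∫ θ in (θs - δ)..(θs + δ), Λ θ * Real.exp (-(l * (H θ - m))))
      + (∫ θ in (θs + δ)..(θs + π / 2), Λ θ * Real.exp (-(l * (H θ - m)))) := by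
    rw [integral_add_adjacent_intervals (intg _ _) (intg _ _),
      integral_add_adjacent_intervals (intg _ _) (intg _ _)]
  set I₁ := ∫ θ in (θs - π / 2)..(θs - δ), Λ θ * Real.exp (-(l * (H θ - m))) with hI₁
  set I₂ := ∫ θ in (θs - δ)..(θs + δ), Λ θ * Real.exp (-(l * (H θ - m))) with hI₂
  set I₃ := ∫ θ in (θs + δ)..(θs + π / 2), Λ θ * Real.exp (-(l * (H θ - m))) with hI₃
  -- central bounds
  have hcentral_sub : ∀ b : ℝ, (∫ θ in (θs - δ)..(θs + δ), Real.exp (-(l * b * (θ - θs) ^ 2)))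
      = ∫ t in (-δ)..δ, Real.exp (-(l * b * t ^ 2)) := by
    intro b
    have := intervalIntegral.integral_comp_sub_right
      (a := θs - δ) (b := θs + δ) (fun t => Real.exp (-(l * b * t ^ 2))) θs
    convert this using 2 <;> ring
  have hupper₂ : I₂ ≤ (L + s) * ∫ t in (-δ)..δ, Real.exp (-(l * b₁ * t ^ 2)) := by
    rw [← hcentral_sub b₁, ← intervalIntegral.integral_const_mul]
    apply intervalIntegral.integral_mono_on (by linarith) (intg _ _)
      ((intg1 _ _ b₁).const_mul _)
    intro θ hθ
    have habs : |θ - θs| ≤ δ := by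
      rw [abs_le]; exact ⟨by linarith [hθ.1], by linarith [hθ.2]⟩
    have hΛb := (hΛnear θ habs).2
    have hq := (hquad θ (le_trans habs hδ₁le)).1
    have hexp : Real.exp (-(l * (H θ - m))) ≤ Real.exp (-(l * b₁ * (θ - θs) ^ 2)) := by
      apply Real.exp_le_exp.mpr
      simp only [neg_le_neg_iff, hm]
      nlinarith [mul_le_mul_of_nonneg_left hq hl0.le]
    exact mul_le_mul hΛb hexp (Real.exp_pos _).le (by linarith)
  have hlower₂ : (L - s) * (∫ t in (-δ)..δ, Real.exp (-(l * b₂ * t ^ 2))) ≤ I₂ := by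
    rw [← hcentral_sub b₂, ← intervalIntegral.integral_const_mul]
    apply intervalIntegral.integral_mono_on (by linarith) ((intg1 _ _ b₂).const_mul _) (intg _ _)
    intro θ hθ
    have habs : |θ - θs| ≤ δ := by
      rw [abs_le]; exact ⟨by linarith [hθ.1], by linarith [hθ.2]⟩
    have hΛb := (hΛnear θ habs).1
    have hq := (hquad θ (le_trans habs hδ₁le)).2
    have hexp : Real.exp (-(l * b₂ * (θ - θs) ^ 2)) ≤ Real.exp (-(l * (H θ - m))) := by
      apply Real.exp_le_exp.mpr
      simp only [neg_le_neg_iff, hm]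
      nlinarith [mul_le_mul_of_nonneg_left hq hl0.le]
    nlinarith [Real.exp_pos (-(l * b₂ * (θ - θs) ^ 2)), hΛpos θ,
      mul_le_mul_of_nonneg_left hexp (hΛpos θ).le,
      mul_le_mul_of_nonneg_right (show L - s ≤ Λ θ from hΛb) (Real.exp_pos (-(l * b₂ * (θ - θs) ^ 2))).le]
  -- tail bounds
  have htb : ∀ θ ∈ K, Λ θ * Real.exp (-(l * (H θ - m))) ≤ CΛ * Real.exp (-(c * l)) := by
    intro θ hθ
    have h1' : Λ θ ≤ CΛ := hΛle θ hθ.1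
    have h2' : Real.exp (-(l * (H θ - m))) ≤ Real.exp (-(c * l)) := by
      apply Real.exp_le_exp.mpr
      have := htail θ hθ
      nlinarith [hl0.le]
    exact mul_le_mul h1' h2' (Real.exp_pos _).le hCΛpos.le
  have hmemK₁ : ∀ θ ∈ Set.Icc (θs - π / 2) (θs - δ), θ ∈ K := by
    intro θ hθ
    refine ⟨⟨hθ.1, by linarith [hθ.2]⟩, ?_⟩
    rw [Set.mem_Ioo]; push_neg
    intro h'
    linarith [hθ.2]
  have hmemK₃ : ∀ θ ∈ Set.Icc (θs + δ) (θs + π / 2), θ ∈ K := by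
    intro θ hθ
    refine ⟨⟨by linarith [hθ.1], hθ.2⟩, ?_⟩
    rw [Set.mem_Ioo]; push_neg
    intro h'
    linarith [hθ.1]
  have htail₁ : I₁ ≤ CΛ * Real.exp (-(c * l)) * (π / 2 - δ) := by
    have := intervalIntegral.integral_mono_on (by linarith : θs - π / 2 ≤ θs - δ)
      (intg _ _) (intervalIntegrable_const) (fun θ hθ => htb θ (hmemK₁ θ hθ))
    rw [intervalIntegral.integral_const, smul_eq_mul] at this
    calc I₁ ≤ (θs - δ - (θs - π / 2)) * (CΛ * Real.exp (-(c * l))) := this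
      _ = CΛ * Real.exp (-(c * l)) * (π / 2 - δ) := by ring
  have htail₃ : I₃ ≤ CΛ * Real.exp (-(c * l)) * (π / 2 - δ) := by
    have := intervalIntegral.integral_mono_on (by linarith : θs + δ ≤ θs + π / 2)
      (intg _ _) (intervalIntegrable_const) (fun θ hθ => htb θ (hmemK₃ θ hθ))
    rw [intervalIntegral.integral_const, smul_eq_mul] at this
    calc I₃ ≤ (θs + π / 2 - (θs + δ)) * (CΛ * Real.exp (-(c * l))) := this
      _ = CΛ * Real.exp (-(c * l)) * (π / 2 - δ) := by ring
  have hpos₁ : 0 ≤ I₁ :=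
    intervalIntegral.integral_nonneg (by linarith)
      (fun u _ => mul_nonneg (hΛpos u).le (Real.exp_pos _).le)
  have hpos₃ : 0 ≤ I₃ :=
    intervalIntegral.integral_nonneg (by linarith)
      (fun u _ => mul_nonneg (hΛpos u).le (Real.exp_pos _).le)
  -- combine
  rw [hsplit, Real.dist_eq, abs_lt]
  have expand : Real.sqrt l * (I₁ + I₂ + I₃)
      = Real.sqrt l * I₂ + Real.sqrt l * (I₁ + I₃) := by ring
  have hE0 : 0 ≤ CΛ * Real.exp (-(c * l)) := mul_nonneg hCΛpos.le (Real.exp_pos _).le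
  constructor
  · -- lower
    have hC := mul_le_mul_of_nonneg_left hlower₂ hsl
    have e2 : Real.sqrt l * ((L - s) * ∫ t in (-δ)..δ, Real.exp (-(l * b₂ * t ^ 2)))
        = (L - s) * (Real.sqrt l * ∫ t in (-δ)..δ, Real.exp (-(l * b₂ * t ^ 2))) := by ring
    have n1 := mul_nonneg hsl hpos₁
    have n3 := mul_nonneg hsl hpos₃
    linarith [hC, h2, e2 ▸ hC]
  · -- upper
    have hA := mul_le_mul_of_nonneg_left hupper₂ hsl
    have e1 : Real.sqrt l * ((L + s) * ∫ t in (-δ)..δ, Real.exp (-(l * b₁ * t ^ 2)))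
        = (L + s) * (Real.sqrt l * ∫ t in (-δ)..δ, Real.exp (-(l * b₁ * t ^ 2))) := by ring
    have b1 : I₁ + I₃ ≤ CΛ * Real.exp (-(c * l)) * π := by
      have hmono := mul_le_mul_of_nonneg_left
        (show π - 2 * δ ≤ π by linarith) hE0
      linarith [htail₁, htail₃, hmono]
    have hB := mul_le_mul_of_nonneg_left b1 hsl
    have e3 : Real.sqrt l * (CΛ * Real.exp (-(c * l)) * π)
        = CΛ * π * (Real.sqrt l * Real.exp (-(c * l))) := by ring
    linarith [hA, hB, h1, h3, e1 ▸ hA, e3 ▸ hB]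

theorem laplace_method_asymptotics (H Λ : ℝ → ℝ) (θs : ℝ)
    (hθs : θs ∈ Set.Ico 0 π) (hH : ContDiff ℝ 2 H)
    (hHper : ∀ θ, H (θ + π) = H θ) (hΛper : ∀ θ, Λ (θ + π) = Λ θ)
    (hΛcont : Continuous Λ) (hΛpos : ∀ θ, 0 < Λ θ)
    (hmin : ∀ θ ∈ Set.Icc (θs - π / 2) (θs + π / 2), θ ≠ θs → H θs < H θ)
    (hanti : StrictAntiOn H (Set.Ioo (θs - π / 2) θs))
    (hmono : StrictMonoOn H (Set.Ioo θs (θs + π / 2)))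
    (hH2 : 0 < iteratedDeriv 2 H θs) :
    Tendsto (fun h : ℝ =>
        (∫ θ in (0 : ℝ)..π, Λ θ * h ^ (2 * (H θ - H θs))) /
          (Λ θs * Real.sqrt (π / (iteratedDeriv 2 H θs * (-Real.log h)))))
      (nhdsWithin 0 (Set.Ioi 0)) (nhds 1) := by
  have pi_pos := Real.pi_pos
  set a := iteratedDeriv 2 H θs with ha
  set m := H θs with hm
  set L := Λ θs with hL
  set T := L * Real.sqrt (2 * π / a) with hT
  have hLpos : 0 < L := hΛpos θs
  have hTpos : 0 < T := mul_pos hLpos (Real.sqrt_pos.mpr (by positivity))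
  have hl : Tendsto (fun h : ℝ => 2 * (-Real.log h)) (nhdsWithin 0 (Set.Ioi 0)) atTop :=
    Tendsto.const_mul_atTop two_pos
      (tendsto_neg_atBot_atTop.comp Real.tendsto_log_nhdsGT_zero)
  have hkey := (lma_key H Λ θs hH hΛcont hΛpos hmin hH2).comp hl
  have hdiv := hkey.div_const T
  rw [div_self hTpos.ne'] at hdiv
  apply hdiv.congr'
  have hev1 : ∀ᶠ h : ℝ in nhdsWithin 0 (Set.Ioi 0), 0 < h := eventually_mem_nhdsWithin
  have hev2 : ∀ᶠ h : ℝ in nhdsWithin 0 (Set.Ioi 0), h < 1 :=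
    (eventually_lt_nhds one_pos).filter_mono nhdsWithin_le_nhds
  filter_upwards [hev1, hev2] with h h0 h1
  set l : ℝ := 2 * (-Real.log h) with hldef
  have hlog : Real.log h < 0 := Real.log_neg h0 h1
  have hl0 : 0 < l := by rw [hldef]; linarith
  have hsl : 0 < Real.sqrt l := Real.sqrt_pos.mpr hl0
  -- numerator
  have hnum : (∫ θ in (0:ℝ)..π, Λ θ * h ^ (2 * (H θ - m)))
      = ∫ θ in (θs - π / 2)..(θs + π / 2), Λ θ * Real.exp (-(l * (H θ - m))) := by
    have hint_eq : (∫ θ in (0:ℝ)..π, Λ θ * h ^ (2 * (H θ - m)))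
        = ∫ θ in (0:ℝ)..π, Λ θ * Real.exp (-(l * (H θ - m))) := by
      apply intervalIntegral.integral_congr
      intro θ _
      simp only
      rw [Real.rpow_def_of_pos h0]
      congr 1
      rw [hldef]; ring
    rw [hint_eq]
    have hper : Function.Periodic (fun θ => Λ θ * Real.exp (-(l * (H θ - m)))) π := by
      intro θ
      simp only [hHper θ, hΛper θ]
    have := hper.intervalIntegral_add_eq 0 (θs - π / 2)
    rw [zero_add] at this
    rw [this, show θs - π / 2 + π = θs + π / 2 by ring]
  -- denominator
  have hden : L * Real.sqrt (π / (a * (-Real.log h))) = T / Real.sqrt l := by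
    have h2 : π / (a * (-Real.log h)) = (2 * π / a) / l := by
      rw [hldef]
      field_simp
    rw [h2, Real.sqrt_div (by positivity) l, hT]
    ring
  simp only [Function.comp]
  rw [hnum, hden, div_div_eq_mul_div]
  ring
end

section
/- Hanson–Wright consequence: let (μ_j)_{1≤j≤m} be nonnegative reals and (Y_j)_{1≤j≤m} i.i.d. standard Gaussian. Set S = Σ_j μ_j (Y_j² − 1). Then for every 0 < ε < 1, P(|S| ≥ ε) ≤ 2 exp(−c min(ε²/Σ_j μ_j², ε/max_j μ_j)) for some absolute constant c > 0. In particular, if max_j μ_j ≤ A/m and Σ_j μ_j² ≤ A²/m, then P(|S| ≥ ε) ≤ 2 exp(−c' ε² m) for a constant c' depending only on A. -/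
open MeasureTheory ProbabilityTheory Real
open scoped ENNReal NNReal

lemma hw_pdf_eq (x : ℝ) : gaussianPDFReal 0 1 x = (Real.sqrt (2 * π))⁻¹ * rexp (-x ^ 2 / 2) := by
  simp [gaussianPDFReal]

lemma hw_exp_merge (a b x : ℝ) :
    rexp (a * x ^ 2 + b) * ((Real.sqrt (2 * π))⁻¹ * rexp (-x ^ 2 / 2))
      = (rexp b * (Real.sqrt (2 * π))⁻¹) * rexp (-(1/2 - a) * x ^ 2) := by
  have h : rexp (a * x ^ 2 + b) * rexp (-x ^ 2 / 2) = rexp b * rexp (-(1/2 - a) * x ^ 2) := by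
    rw [← Real.exp_add, ← Real.exp_add]; congr 1; ring
  linear_combination ((Real.sqrt (2 * π))⁻¹) * h

lemma hw_gauss_integrable {a : ℝ} (ha : a < 1/2) (b : ℝ) :
    Integrable (fun x => rexp (a * x ^ 2 + b)) (gaussianReal 0 1) := by
  rw [gaussianReal_of_var_ne_zero _ one_ne_zero]
  rw [integrable_withDensity_iff (measurable_gaussianPDF _ _)
    (ae_of_all _ fun x => ENNReal.ofReal_lt_top)]
  have : (fun x => rexp (a * x ^ 2 + b) * (gaussianPDF 0 1 x).toReal)
      = fun x => (rexp b * (Real.sqrt (2 * π))⁻¹) * rexp (-(1/2 - a) * x ^ 2) := by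
    ext x
    rw [gaussianPDF, ENNReal.toReal_ofReal (gaussianPDFReal_nonneg _ _ _), hw_pdf_eq,
      hw_exp_merge]
  rw [this]
  exact (integrable_exp_neg_mul_sq (by linarith)).const_mul _

lemma hw_gauss_integral {a : ℝ} (ha : a < 1/2) (b : ℝ) :
    ∫ x, rexp (a * x ^ 2 + b) ∂(gaussianReal 0 1)
      = rexp b * (Real.sqrt (1 - 2 * a))⁻¹ := by
  rw [gaussianReal_of_var_ne_zero _ one_ne_zero]
  have hpdf : gaussianPDF 0 1 = fun x => ((Real.toNNReal (gaussianPDFReal 0 1 x) : ℝ≥0) : ℝ≥0∞) := rfl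
  rw [hpdf, integral_withDensity_eq_integral_smul
    ((measurable_gaussianPDFReal 0 1).real_toNNReal) _]
  have : (fun x => (Real.toNNReal (gaussianPDFReal 0 1 x)) • rexp (a * x ^ 2 + b))
      = fun x => (rexp b * (Real.sqrt (2 * π))⁻¹) * rexp (-(1/2 - a) * x ^ 2) := by
    ext x
    rw [NNReal.smul_def, smul_eq_mul, Real.coe_toNNReal _ (gaussianPDFReal_nonneg _ _ _), hw_pdf_eq]
    rw [mul_comm, hw_exp_merge]
  rw [this, integral_const_mul, integral_gaussian]
  have h2 : (0:ℝ) < 1/2 - a := by linarith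
  have hpi : (0:ℝ) < π := Real.pi_pos
  rw [mul_assoc]
  congr 1
  have h1 : Real.sqrt π ≠ 0 := by positivity
  have h3 : Real.sqrt 2 ≠ 0 := by positivity
  have h4 : Real.sqrt (1/2 - a) ≠ 0 := by positivity
  have hs : Real.sqrt (1 - 2*a) = Real.sqrt 2 * Real.sqrt (1/2 - a) := by
    rw [show (1:ℝ) - 2*a = 2 * (1/2 - a) by ring, Real.sqrt_mul (by norm_num)]
  have h5 : (0:ℝ) < Real.sqrt (1 - 2*a) := by rw [hs]; positivity
  rw [Real.sqrt_div hpi.le, Real.sqrt_mul (by norm_num : (0:ℝ) ≤ 2), hs, div_eq_mul_inv,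
    mul_inv, mul_inv]
  field_simp

lemma hw_exp_bound {a : ℝ} (ha : |a| ≤ 1/5) :
    rexp (-a) * (Real.sqrt (1 - 2*a))⁻¹ ≤ rexp (4 * a^2) := by
  obtain ⟨ha1, ha2⟩ := abs_le.mp ha
  have h2a : (0:ℝ) < 1 - 2*a := by linarith
  have key : rexp (-2*a - 8*a^2) ≤ 1 - 2*a := by
    have hx : (0:ℝ) < 1 + (2*a + 8*a^2) := by nlinarith
    have h1 : rexp (-(2*a + 8*a^2)) ≤ (1 + (2*a + 8*a^2))⁻¹ := by
      rw [Real.exp_neg]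
      refine inv_anti₀ hx ?_
      linarith [Real.add_one_le_exp (2*a + 8*a^2)]
    have h2 : (1 + (2*a + 8*a^2))⁻¹ ≤ 1 - 2*a := by
      rw [inv_le_iff_one_le_mul₀ hx]
      nlinarith
    calc rexp (-2*a - 8*a^2) = rexp (-(2*a + 8*a^2)) := by ring_nf
      _ ≤ _ := h1.trans h2
  have hsq : rexp (-a - 4*a^2) ≤ Real.sqrt (1 - 2*a) := by
    rw [Real.le_sqrt (Real.exp_pos _).le h2a.le]
    calc rexp (-a - 4*a^2) ^ 2 = rexp (-2*a - 8*a^2) := by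
          rw [← Real.exp_nat_mul]; congr 1; ring
      _ ≤ 1 - 2*a := key
  have hinv : (Real.sqrt (1 - 2*a))⁻¹ ≤ rexp (a + 4*a^2) :=
    calc (Real.sqrt (1 - 2*a))⁻¹ ≤ (rexp (-a - 4*a^2))⁻¹ :=
          inv_anti₀ (Real.exp_pos _) hsq
      _ = rexp (a + 4*a^2) := by rw [← Real.exp_neg]; congr 1; ring
  calc rexp (-a) * (Real.sqrt (1 - 2*a))⁻¹ ≤ rexp (-a) * rexp (a + 4*a^2) :=
        mul_le_mul_of_nonneg_left hinv (Real.exp_pos _).le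
    _ = rexp (4 * a^2) := by rw [← Real.exp_add]; congr 1; ring

lemma hw_coord {Ω : Type} [MeasurableSpace Ω] {P : Measure Ω} [IsProbabilityMeasure P]
    {Yj : Ω → ℝ} (hYm : Measurable Yj) (hmap : P.map Yj = gaussianReal 0 1)
    {c s : ℝ} (hcs : |s * c| ≤ 1/5) :
    Integrable (fun ω => rexp (s * (c * ((Yj ω) ^ 2 - 1)))) P ∧
      mgf (fun ω => c * ((Yj ω) ^ 2 - 1)) P s ≤ rexp (4 * (s * c) ^ 2) := by
  have ha : s * c < 1/2 := lt_of_le_of_lt ((le_abs_self _).trans hcs) (by norm_num)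
  have hint_g : Integrable (fun x : ℝ => rexp ((s*c) * x ^ 2 + (-(s*c)))) (gaussianReal 0 1) :=
    hw_gauss_integrable ha _
  have hmapInt : Integrable (fun x : ℝ => rexp ((s*c) * x ^ 2 + (-(s*c)))) (P.map Yj) := by
    rw [hmap]; exact hint_g
  have hcomp : Integrable ((fun x : ℝ => rexp ((s*c) * x ^ 2 + (-(s*c)))) ∘ Yj) P :=
    (integrable_map_measure hmapInt.aestronglyMeasurable hYm.aemeasurable).mp hmapInt
  have hfun : (fun ω => rexp (s * (c * ((Yj ω) ^ 2 - 1))))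
      = (fun x : ℝ => rexp ((s*c) * x ^ 2 + (-(s*c)))) ∘ Yj := by
    ext ω; simp only [Function.comp]; congr 1; ring
  refine ⟨hfun ▸ hcomp, ?_⟩
  have hmgf : mgf (fun ω => c * ((Yj ω) ^ 2 - 1)) P s
      = ∫ x, rexp ((s*c) * x ^ 2 + (-(s*c))) ∂(gaussianReal 0 1) := by
    rw [← hmap, integral_map hYm.aemeasurable hmapInt.aestronglyMeasurable]
    show ∫ ω, rexp (s * (c * ((Yj ω) ^ 2 - 1))) ∂P = _
    rw [hfun]; rfl
  rw [hmgf, hw_gauss_integral ha]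
  exact hw_exp_bound hcs

lemma hw_core (Ω : Type) [MeasurableSpace Ω] (P : Measure Ω) [IsProbabilityMeasure P]
    (m : ℕ) (hm : 0 < m) (μv : Fin m → ℝ) (Y : Fin m → Ω → ℝ)
    (hμ : ∀ j, 0 ≤ μv j) (hYm : ∀ j, Measurable (Y j))
    (hind : iIndepFun Y P)
    (hmap : ∀ j, P.map (Y j) = gaussianReal 0 1)
    (ε : ℝ) (hε : 0 < ε) (hε1 : ε < 1) :
    (P {ω | ε ≤ |∑ j, μv j * ((Y j ω) ^ 2 - 1)|}).toReal
      ≤ 2 * rexp (-(1/16) * min (ε ^ 2 / ∑ j, (μv j) ^ 2) (ε / ⨆ j, μv j)) := by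
  by_cases hz : ∀ j, μv j = 0
  · have hempty : {ω | ε ≤ |∑ j, μv j * ((Y j ω) ^ 2 - 1)|} = (∅ : Set Ω) := by
      ext ω; simp [hz, le_of_lt hε, not_le.mpr hε]
    rw [hempty]
    simp only [measure_empty, ENNReal.toReal_zero]
    positivity
  · push_neg at hz
    obtain ⟨j0, hj0⟩ := hz
    haveI : Nonempty (Fin m) := ⟨j0⟩
    set Sq : ℝ := ∑ j, (μv j) ^ 2 with hSq
    set M : ℝ := ⨆ j, μv j with hM
    have hSqpos : 0 < Sq := by
      refine Finset.sum_pos' (fun j _ => sq_nonneg _) ⟨j0, Finset.mem_univ _, ?_⟩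
      exact pow_pos (lt_of_le_of_ne (hμ j0) (Ne.symm hj0)) 2
    have hbdd : BddAbove (Set.range μv) := (Set.finite_range μv).bddAbove
    have hMj : ∀ j, μv j ≤ M := fun j => le_ciSup hbdd j
    have hMpos : 0 < M := lt_of_lt_of_le (lt_of_le_of_ne (hμ j0) (Ne.symm hj0)) (hMj j0)
    set t : ℝ := min (ε / (8 * Sq)) (1 / (5 * M)) with ht_def
    have htpos : 0 < t := lt_min (by positivity) (by positivity)
    -- the summands
    set X : Fin m → Ω → ℝ := fun j => (fun x => μv j * (x ^ 2 - 1)) ∘ Y j with hX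
    have hXm : ∀ j, Measurable (X j) :=
      fun j => (((measurable_id.pow_const 2).sub measurable_const).const_mul _).comp (hYm j)
    have hXind : iIndepFun X P :=
      hind.comp _ (fun j => ((measurable_id.pow_const 2).sub measurable_const).const_mul _)
    have hcoord : ∀ (s : ℝ), |s| ≤ t → ∀ j,
        Integrable (fun ω => rexp (s * X j ω)) P ∧ mgf (X j) P s ≤ rexp (4 * (s * μv j) ^ 2) := by
      intro s hs j
      have hcs : |s * μv j| ≤ 1/5 := by
        rw [abs_mul, abs_of_nonneg (hμ j)]
        calc |s| * μv j ≤ t * M :=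
              mul_le_mul hs (hMj j) (hμ j) htpos.le
          _ ≤ (1 / (5 * M)) * M := by
              exact mul_le_mul_of_nonneg_right (min_le_right _ _) hMpos.le
          _ = 1/5 := by field_simp
      exact hw_coord (hYm j) (hmap j) hcs
    have hmgf_bound : ∀ (s : ℝ), |s| ≤ t →
        mgf (∑ j, X j) P s ≤ rexp (4 * s ^ 2 * Sq) := by
      intro s hs
      rw [hXind.mgf_sum hXm Finset.univ]
      calc ∏ j, mgf (X j) P s ≤ ∏ j, rexp (4 * (s * μv j) ^ 2) :=
            Finset.prod_le_prod (fun j _ => mgf_nonneg) (fun j _ => (hcoord s hs j).2)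
        _ = rexp (∑ j, 4 * (s * μv j) ^ 2) := by rw [Real.exp_sum]
        _ = rexp (4 * s ^ 2 * Sq) := by
            congr 1
            rw [hSq, Finset.mul_sum]
            exact Finset.sum_congr rfl (fun j _ => by ring)
    have h_int_t : Integrable (fun ω => rexp (t * (∑ j, X j) ω)) P :=
      hXind.integrable_exp_mul_sum hXm
        (fun j _ => (hcoord t (by rw [abs_of_pos htpos]) j).1)
    have h_int_nt : Integrable (fun ω => rexp ((-t) * (∑ j, X j) ω)) P :=
      hXind.integrable_exp_mul_sum hXm
        (fun j _ => (hcoord (-t) (by rw [abs_neg, abs_of_pos htpos]) j).1)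
    have hup := measure_ge_le_exp_mul_mgf (X := ∑ j, X j) (μ := P) ε htpos.le h_int_t
    have hdn := measure_le_le_exp_mul_mgf (X := ∑ j, X j) (μ := P) (-ε)
      (neg_nonpos.mpr htpos.le) h_int_nt
    -- combine
    have hSapp : ∀ ω, (∑ j, X j) ω = ∑ j, μv j * ((Y j ω) ^ 2 - 1) := by
      intro ω; simp [hX, Finset.sum_apply]
    have hsub : {ω | ε ≤ |∑ j, μv j * ((Y j ω) ^ 2 - 1)|}
        ⊆ {ω | ε ≤ (∑ j, X j) ω} ∪ {ω | (∑ j, X j) ω ≤ -ε} := by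
      intro ω hω
      simp only [Set.mem_setOf_eq] at hω
      simp only [Set.mem_setOf_eq, Set.mem_union, hSapp]
      rcases le_abs.mp hω with h | h
      · exact Or.inl h
      · exact Or.inr (by linarith)
    have hPsplit : (P {ω | ε ≤ |∑ j, μv j * ((Y j ω) ^ 2 - 1)|}).toReal
        ≤ (P {ω | ε ≤ (∑ j, X j) ω}).toReal + (P {ω | (∑ j, X j) ω ≤ -ε}).toReal := by
      calc (P {ω | ε ≤ |∑ j, μv j * ((Y j ω) ^ 2 - 1)|}).toReal
          ≤ (P {ω | ε ≤ (∑ j, X j) ω} + P {ω | (∑ j, X j) ω ≤ -ε}).toReal := by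
            refine ENNReal.toReal_mono ?_ ((measure_mono hsub).trans (measure_union_le _ _))
            exact ENNReal.add_ne_top.mpr ⟨measure_ne_top _ _, measure_ne_top _ _⟩
        _ = _ := ENNReal.toReal_add (measure_ne_top _ _) (measure_ne_top _ _)
    -- exponent comparison
    have htS : t * Sq ≤ ε / 8 := by
      have h := min_le_left (ε / (8 * Sq)) (1 / (5 * M))
      calc t * Sq ≤ (ε / (8 * Sq)) * Sq := mul_le_mul_of_nonneg_right h hSqpos.le
        _ = ε / 8 := by field_simp
    have hminle : min (ε ^ 2 / Sq) (ε / M) ≤ 8 * t * ε := by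
      rcases min_cases (ε / (8 * Sq)) (1 / (5 * M)) with ⟨heq, _⟩ | ⟨heq, _⟩
      · refine (min_le_left _ _).trans ?_
        rw [ht_def, heq]
        apply le_of_eq
        field_simp
      · refine (min_le_right _ _).trans ?_
        rw [ht_def, heq]
        rw [div_le_iff₀ hMpos]
        have h5 : 8 * (1 / (5 * M)) * ε * M = (8 / 5) * ε := by field_simp
        rw [h5]
        linarith
    have hexp : -(t * ε) + 4 * t ^ 2 * Sq ≤ -(1/16) * min (ε ^ 2 / Sq) (ε / M) := by
      have h1 : 4 * t ^ 2 * Sq ≤ t * ε / 2 := by nlinarith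
      linarith
    have hmt : mgf (∑ j, X j) P t ≤ rexp (4 * t ^ 2 * Sq) :=
      hmgf_bound t (by rw [abs_of_pos htpos])
    have hmnt : mgf (∑ j, X j) P (-t) ≤ rexp (4 * t ^ 2 * Sq) := by
      have h := hmgf_bound (-t) (by rw [abs_neg, abs_of_pos htpos])
      simpa using h
    rw [show (-t * ε) = -(t * ε) by ring] at hup
    rw [show (- -t * -ε) = -(t * ε) by ring] at hdn
    calc (P {ω | ε ≤ |∑ j, μv j * ((Y j ω) ^ 2 - 1)|}).toReal
        ≤ (P {ω | ε ≤ (∑ j, X j) ω}).toReal + (P {ω | (∑ j, X j) ω ≤ -ε}).toReal := hPsplit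
      _ ≤ rexp (-(t * ε)) * mgf (∑ j, X j) P t + rexp (-(t * ε)) * mgf (∑ j, X j) P (-t) :=
          add_le_add hup hdn
      _ ≤ rexp (-(t * ε)) * rexp (4 * t ^ 2 * Sq) + rexp (-(t * ε)) * rexp (4 * t ^ 2 * Sq) :=
          add_le_add (mul_le_mul_of_nonneg_left hmt (Real.exp_pos _).le)
            (mul_le_mul_of_nonneg_left hmnt (Real.exp_pos _).le)
      _ = 2 * rexp (-(t * ε) + 4 * t ^ 2 * Sq) := by rw [Real.exp_add]; ring
      _ ≤ 2 * rexp (-(1/16) * min (ε ^ 2 / Sq) (ε / M)) := by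
          have := Real.exp_le_exp.mpr hexp
          linarith

theorem hanson_wright_diagonal :
    (∃ c > (0 : ℝ), ∀ (Ω : Type) [MeasurableSpace Ω] (P : Measure Ω),
      IsProbabilityMeasure P →
      ∀ (m : ℕ), 0 < m → ∀ (μv : Fin m → ℝ) (Y : Fin m → Ω → ℝ),
      (∀ j, 0 ≤ μv j) → (∀ j, Measurable (Y j)) →
      iIndepFun Y P →
      (∀ j, P.map (Y j) = gaussianReal 0 1) →
      ∀ ε : ℝ, 0 < ε → ε < 1 →
        (P {ω | ε ≤ |∑ j, μv j * ((Y j ω) ^ 2 - 1)|}).toReal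
          ≤ 2 * Real.exp (-c * min (ε ^ 2 / ∑ j, (μv j) ^ 2) (ε / ⨆ j, μv j))) ∧
    (∀ A > (0 : ℝ), ∃ c' > (0 : ℝ), ∀ (Ω : Type) [MeasurableSpace Ω] (P : Measure Ω),
      IsProbabilityMeasure P →
      ∀ (m : ℕ), 0 < m → ∀ (μv : Fin m → ℝ) (Y : Fin m → Ω → ℝ),
      (∀ j, 0 ≤ μv j) → (∀ j, Measurable (Y j)) →
      iIndepFun Y P →
      (∀ j, P.map (Y j) = gaussianReal 0 1) →
      (∀ j, μv j ≤ A / m) → (∑ j, (μv j) ^ 2 ≤ A ^ 2 / m) →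
      ∀ ε : ℝ, 0 < ε → ε < 1 →
        (P {ω | ε ≤ |∑ j, μv j * ((Y j ω) ^ 2 - 1)|}).toReal
          ≤ 2 * Real.exp (-c' * ε ^ 2 * m)) := by
  constructor
  · refine ⟨1/16, by norm_num, ?_⟩
    intro Ω _ P hP m hm μv Y hμ hYm hind hmap ε hε hε1
    haveI := hP
    exact hw_core Ω P m hm μv Y hμ hYm hind hmap ε hε hε1
  · intro A hA
    refine ⟨(1/16) * min ((A^2)⁻¹) (A⁻¹), by positivity, ?_⟩
    intro Ω _ P hP m hm μv Y hμ hYm hind hmap hA1 hA2 ε hε hε1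
    haveI := hP
    by_cases hz : ∀ j, μv j = 0
    · have hempty : {ω | ε ≤ |∑ j, μv j * ((Y j ω) ^ 2 - 1)|} = (∅ : Set Ω) := by
        ext ω; simp [hz, not_le.mpr hε]
      rw [hempty]
      simp only [measure_empty, ENNReal.toReal_zero]
      positivity
    · push_neg at hz
      obtain ⟨j0, hj0⟩ := hz
      haveI : Nonempty (Fin m) := ⟨j0⟩
      have hμ0pos : 0 < μv j0 := lt_of_le_of_ne (hμ j0) (Ne.symm hj0)
      set Sq : ℝ := ∑ j, (μv j) ^ 2 with hSqd
      set M : ℝ := ⨆ j, μv j with hMd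
      have hSqpos : 0 < Sq := by
        refine Finset.sum_pos' (fun j _ => sq_nonneg _) ⟨j0, Finset.mem_univ _, ?_⟩
        exact pow_pos hμ0pos 2
      have hbdd : BddAbove (Set.range μv) := (Set.finite_range μv).bddAbove
      have hMpos : 0 < M := lt_of_lt_of_le hμ0pos (le_ciSup hbdd j0)
      have hm' : (0:ℝ) < (m:ℝ) := Nat.cast_pos.mpr hm
      have hMle : M ≤ A / m := ciSup_le hA1
      have h1 : ε^2 * m / A^2 ≤ ε^2 / Sq := by
        have h := div_le_div_of_nonneg_left (show (0:ℝ) ≤ ε^2 by positivity) hSqpos hA2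
        calc ε^2 * m / A^2 = ε^2 / (A^2 / m) := by field_simp
          _ ≤ _ := h
      have hε2 : ε^2 ≤ ε := by nlinarith
      have h2 : ε^2 * m / A ≤ ε / M := by
        have hstep : ε / (A / m) ≤ ε / M := div_le_div_of_nonneg_left hε.le hMpos hMle
        calc ε^2 * m / A ≤ ε * m / A := by
              refine (div_le_div_iff_of_pos_right hA).mpr ?_
              nlinarith
          _ = ε / (A / m) := by field_simp
          _ ≤ ε / M := hstep
      have hk1 : min ((A^2)⁻¹) (A⁻¹) * ε^2 * (m:ℝ) ≤ ε^2 / Sq := by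
        have hmono := mul_le_mul_of_nonneg_right (min_le_left ((A^2)⁻¹) (A⁻¹))
          (show (0:ℝ) ≤ ε^2 * (m:ℝ) by positivity)
        calc min ((A^2)⁻¹) (A⁻¹) * ε^2 * (m:ℝ)
            = min ((A^2)⁻¹) (A⁻¹) * (ε^2 * (m:ℝ)) := by ring
          _ ≤ (A^2)⁻¹ * (ε^2 * (m:ℝ)) := hmono
          _ = ε^2 * (m:ℝ) / A^2 := by rw [div_eq_mul_inv]; ring
          _ ≤ ε^2 / Sq := h1
      have hk2 : min ((A^2)⁻¹) (A⁻¹) * ε^2 * (m:ℝ) ≤ ε / M := by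
        have hmono := mul_le_mul_of_nonneg_right (min_le_right ((A^2)⁻¹) (A⁻¹))
          (show (0:ℝ) ≤ ε^2 * (m:ℝ) by positivity)
        calc min ((A^2)⁻¹) (A⁻¹) * ε^2 * (m:ℝ)
            = min ((A^2)⁻¹) (A⁻¹) * (ε^2 * (m:ℝ)) := by ring
          _ ≤ A⁻¹ * (ε^2 * (m:ℝ)) := hmono
          _ = ε^2 * (m:ℝ) / A := by rw [div_eq_mul_inv]; ring
          _ ≤ ε / M := h2
      have hkey : min ((A^2)⁻¹) (A⁻¹) * ε^2 * (m:ℝ) ≤ min (ε^2 / Sq) (ε / M) := le_min hk1 hk2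
      have hcore := hw_core Ω P m hm μv Y hμ hYm hind hmap ε hε hε1
      refine hcore.trans ?_
      have hexp : -(1/16) * min (ε^2 / Sq) (ε / M)
          ≤ -((1/16) * min ((A^2)⁻¹) (A⁻¹)) * ε^2 * (m:ℝ) := by
        have h16 := mul_le_mul_of_nonneg_left hkey (show (0:ℝ) ≤ 1/16 by norm_num)
        linarith
      have := Real.exp_le_exp.mpr hexp
      linarith
end
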